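/- arXiv:2304.02244 — 11 statements merged into one kernel-verified Lean document; each statement's English description precedes it below -/
import Mathlib

section
/- Let G be a group and let (G_(m))_{m ∈ ℕ} be an increasing sequence of subgroups of G (G_(m) ⊆ G_(m+1) for all m) whose union is all of G. Then G admits a positive cone if and only if G_(m) admits a positive cone for every m ∈ ℕ. -/
/-!
Positive cones restrict to subgroups. Conversely, given positive cones `Q m` of the `G_(m)`,
fix a non-principal ultrafilter `U` on `ℕ` and declare `g` positive when `g ∈ Q m` for
`U`-almost every `m`; since every `g` lies in all but finitely many `G_(m)`, each defining
property of a cone, holding in almost every `G_(m)`, passes to this limit.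
-/

/-- `P` is a positive cone of the group `G`: it is closed under multiplication and
`G` is the disjoint union of `P`, `P⁻¹` and `{1}`. -/
def IsPositiveCone {G : Type*} [Group G] (P : Set G) : Prop :=
  (∀ a ∈ P, ∀ b ∈ P, a * b ∈ P) ∧
  (∀ g : G, g ∈ P ∨ g⁻¹ ∈ P ∨ g = 1) ∧
  (∀ g ∈ P, g⁻¹ ∉ P) ∧ (1 : G) ∉ P

namespace IsPositiveCone

variable {G H : Type*} [Group G] [Group H]

theorem preimage {P : Set G} (hP : IsPositiveCone P) {f : H →* G}
    (hf : Function.Injective f) : IsPositiveCone (f ⁻¹' P) := by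
  obtain ⟨hmul, htri, hdisj, hone⟩ := hP
  refine ⟨fun a ha b hb => ?_, fun g => ?_, fun g hg => ?_, ?_⟩
  · simpa using hmul _ ha _ hb
  · rcases htri (f g) with h | h | h
    · exact Or.inl h
    · exact Or.inr (Or.inl (by simpa using h))
    · exact Or.inr (Or.inr (hf (by simpa using h)))
  · simpa using hdisj _ hg
  · simpa using hone

end IsPositiveCone

section UltrafilterLimit

variable {G ι : Type*} [Group G]

def ultrafilterLimitCone (U : Ultrafilter ι) (K : ι → Subgroup G) (Q : ∀ i, Set (K i)) :
    Set G :=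
  {g | ∀ᶠ i in U, ∃ h : g ∈ K i, (⟨g, h⟩ : K i) ∈ Q i}

theorem isPositiveCone_ultrafilterLimitCone {U : Ultrafilter ι} {K : ι → Subgroup G}
    (hK : ∀ g : G, ∀ᶠ i in U, g ∈ K i) {Q : ∀ i, Set (K i)}
    (hQ : ∀ i, IsPositiveCone (Q i)) : IsPositiveCone (ultrafilterLimitCone U K Q) := by
  refine ⟨fun a ha b hb => ?_, fun g => ?_, fun g hg hg' => ?_, fun h1 => ?_⟩
  · filter_upwards [ha, hb] with i ⟨hai, hQa⟩ ⟨hbi, hQb⟩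
    exact ⟨mul_mem hai hbi, (hQ i).1 _ hQa _ hQb⟩
  · by_cases hg1 : g = 1
    · exact Or.inr (Or.inr hg1)
    have hsplit : ∀ᶠ i in U, (∃ h : g ∈ K i, (⟨g, h⟩ : K i) ∈ Q i) ∨
        ∃ h : g⁻¹ ∈ K i, (⟨g⁻¹, h⟩ : K i) ∈ Q i := by
      filter_upwards [hK g] with i hgi
      rcases (hQ i).2.1 ⟨g, hgi⟩ with h | h | h
      · exact Or.inl ⟨hgi, h⟩
      · exact Or.inr ⟨inv_mem hgi, h⟩
      · exact absurd (congrArg Subtype.val h) hg1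
    rcases Ultrafilter.eventually_or.mp hsplit with h | h
    · exact Or.inl h
    · exact Or.inr (Or.inl h)
  · obtain ⟨i, ⟨hgi, hQg⟩, ⟨_, hQg'⟩⟩ := (hg.and hg').exists
    exact (hQ i).2.2.1 ⟨g, hgi⟩ hQg hQg'
  · obtain ⟨i, _, hQ1⟩ := h1.exists
    exact (hQ i).2.2.2 hQ1

end UltrafilterLimit

theorem Subgroup.eventually_mem_of_monotone_of_forall_exists_mem {G : Type*} [Group G]
    {K : ℕ → Subgroup G} (hmono : Monotone K) (hcover : ∀ g : G, ∃ m, g ∈ K m) (g : G) :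
    ∀ᶠ m in Filter.atTop, g ∈ K m := by
  obtain ⟨m₀, hm₀⟩ := hcover g
  exact Filter.eventually_atTop.mpr ⟨m₀, fun m hm => hmono hm hm₀⟩

theorem stmt2 {G : Type*} [Group G] (Gm : ℕ → Subgroup G)
    (hmono : ∀ m : ℕ, Gm m ≤ Gm (m + 1))
    (hunion : ∀ x : G, ∃ m : ℕ, x ∈ Gm m) :
    (∃ P : Set G, IsPositiveCone P) ↔
      ∀ m : ℕ, ∃ Q : Set (Gm m), IsPositiveCone Q := by
  constructor
  · rintro ⟨P, hP⟩ m
    exact ⟨_, hP.preimage (Gm m).subtype_injective⟩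
  · intro hQ
    choose Q hQ using hQ
    let U : Ultrafilter ℕ := Ultrafilter.of Filter.atTop
    have hcover : ∀ g : G, ∀ᶠ m in U, g ∈ Gm m := fun g =>
      Ultrafilter.of_le _ <| Subgroup.eventually_mem_of_monotone_of_forall_exists_mem
        (monotone_nat_of_le_succ hmono) hunion g
    exact ⟨_, isPositiveCone_ultrafilterLimitCone hcover hQ⟩
end

section
/- Let G be a group with positive cone P. Let (G_n)_{n ∈ ℤ} and (A_n)_{n ∈ ℤ} be families of subgroups of G such that A_n ⊆ G_n and A_n ⊆ G_{n+1} for all n ∈ ℤ. For each m ≥ 0 let G_(m) be the subgroup of G generated by the union of the G_j for |j| ≤ m, and set P_(m) := P ∩ G_(m); assume that the union of the G_(m) over all m ≥ 0 is G. Assume: (D) for every m ≥ 0 there exists p̃_m ∈ P_(m) such that every q ∈ P_(m) satisfies q = p̃_m or p̃_m⁻¹ · q ∈ P (each P_(m) is discrete with minimal positive element p̃_m); (C1) for every n ∈ ℤ there exists m ≥ 0 with G_n ∪ G_{n+1} ⊆ G_(m) such that every subgroup of G_(m) convex with respect to P_(m) that contains A_n also contains G_{n+1}; (C2) for every n ∈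 ℤ there exists m ≥ 0 with G_n ∪ G_{n+1} ⊆ G_(m) such that every subgroup of G_(m) convex with respect to P_(m) that contains A_n also contains G_n; (C3) for every m ≥ 0 there exists an integer ℓ ≥ m such that every subgroup of G_(ℓ) convex with respect to P_(ℓ) that contains p̃_m also contains A_ℓ. Then the only subgroups of G that are convex with respect to P are the trivial subgroup {1} and G itself. -/
/-- A subgroup `C` of `G` is convex with respect to `P` if whenever `c₁, c₂ ∈ C`
and `g ∈ G` satisfy `c₁⁻¹ * g ∈ P ∪ {1}` and `g⁻¹ * c₂ ∈ P ∪ {1}`, then `g ∈ C`. -/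
def IsConvex {G : Type*} [Group G] (P : Set G) (C : Subgroup G) : Prop :=
  ∀ c₁ ∈ C, ∀ c₂ ∈ C, ∀ g : G,
    c₁⁻¹ * g ∈ P ∪ {1} → g⁻¹ * c₂ ∈ P ∪ {1} → g ∈ C

/-- `C` is a subgroup of `H` which is convex with respect to the set `Q`
(a positive cone of `H`): whenever `c₁, c₂ ∈ C` and `g ∈ H` satisfy
`c₁⁻¹ * g ∈ Q ∪ {1}` and `g⁻¹ * c₂ ∈ Q ∪ {1}`, then `g ∈ C`. -/
def IsConvexIn {G : Type*} [Group G] (H : Subgroup G) (Q : Set G) (C : Subgroup G) : Prop :=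
  C ≤ H ∧ ∀ c₁ ∈ C, ∀ c₂ ∈ C, ∀ g ∈ H,
    c₁⁻¹ * g ∈ Q ∪ {1} → g⁻¹ * c₂ ∈ Q ∪ {1} → g ∈ C

theorem stmt5 {G : Type*} [Group G] (P : Set G) (hP : IsPositiveCone P)
    (Gn An : ℤ → Subgroup G)
    (hAn : ∀ n : ℤ, An n ≤ Gn n) (hAn' : ∀ n : ℤ, An n ≤ Gn (n + 1))
    (GM : ℕ → Subgroup G)
    (hGM : ∀ m : ℕ,
      GM m = Subgroup.closure (⋃ j ∈ {j : ℤ | |j| ≤ (m : ℤ)}, (Gn j : Set G)))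
    (hunion : ∀ x : G, ∃ m : ℕ, x ∈ GM m)
    -- (D) : each `P_(m) = P ∩ G_(m)` is discrete with minimal positive element `pt m`
    (pt : ℕ → G)
    (hD : ∀ m : ℕ, pt m ∈ P ∩ (GM m : Set G) ∧
      ∀ q ∈ P ∩ (GM m : Set G), q = pt m ∨ (pt m)⁻¹ * q ∈ P)
    -- (C1)
    (hC1 : ∀ n : ℤ, ∃ m : ℕ, Gn n ≤ GM m ∧ Gn (n + 1) ≤ GM m ∧
      ∀ C : Subgroup G, IsConvexIn (GM m) (P ∩ (GM m : Set G)) C →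
        An n ≤ C → Gn (n + 1) ≤ C)
    -- (C2)
    (hC2 : ∀ n : ℤ, ∃ m : ℕ, Gn n ≤ GM m ∧ Gn (n + 1) ≤ GM m ∧
      ∀ C : Subgroup G, IsConvexIn (GM m) (P ∩ (GM m : Set G)) C →
        An n ≤ C → Gn n ≤ C)
    -- (C3)
    (hC3 : ∀ m : ℕ, ∃ ℓ : ℕ, m ≤ ℓ ∧
      ∀ C : Subgroup G, IsConvexIn (GM ℓ) (P ∩ (GM ℓ : Set G)) C →
        pt m ∈ C → An (ℓ : ℤ) ≤ C) :
    ∀ C : Subgroup G, IsConvex P C → C = ⊥ ∨ C = ⊤ := by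
  intro C hC
  by_cases hbot : C = ⊥
  · exact Or.inl hbot
  right
  -- the restriction of a convex subgroup is convex in each GM m
  have hconv : ∀ m : ℕ, IsConvexIn (GM m) (P ∩ (GM m : Set G)) (C ⊓ GM m) := by
    intro m
    refine ⟨inf_le_right, ?_⟩
    intro c₁ hc₁ c₂ hc₂ g hg h1 h2
    refine Subgroup.mem_inf.mpr ⟨hC c₁ (Subgroup.mem_inf.mp hc₁).1 c₂ (Subgroup.mem_inf.mp hc₂).1 g ?_ ?_, hg⟩
    · rcases h1 with h | h
      · exact Or.inl h.1
      · exact Or.inr h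
    · rcases h2 with h | h
      · exact Or.inl h.1
      · exact Or.inr h
  have hGMmono : ∀ m ℓ : ℕ, m ≤ ℓ → GM m ≤ GM ℓ := by
    intro m ℓ h
    rw [hGM m, hGM ℓ]
    apply Subgroup.closure_mono
    intro x hx
    simp only [Set.mem_iUnion, Set.mem_setOf_eq] at hx ⊢
    obtain ⟨j, hj, hxj⟩ := hx
    exact ⟨j, le_trans hj (by exact_mod_cast h), hxj⟩
  -- key consequences of C1, C2
  have key2 : ∀ n : ℤ, An n ≤ C → Gn n ≤ C := by
    intro n hAnC
    obtain ⟨m, h1, _h2, h3⟩ := hC2 n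
    exact le_trans (h3 (C ⊓ GM m) (hconv m) (le_inf hAnC (le_trans (hAn n) h1))) inf_le_left
  have key1 : ∀ n : ℤ, An n ≤ C → Gn (n + 1) ≤ C := by
    intro n hAnC
    obtain ⟨m, h1, _h2, h3⟩ := hC1 n
    exact le_trans (h3 (C ⊓ GM m) (hconv m) (le_inf hAnC (le_trans (hAn n) h1))) inf_le_left
  have step_up : ∀ n : ℤ, An n ≤ C → An (n + 1) ≤ C := fun n h =>
    le_trans (hAn (n + 1)) (key1 n h)
  have step_down : ∀ n : ℤ, An n ≤ C → An (n - 1) ≤ C := by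
    intro n h
    have h' := hAn' (n - 1)
    rw [sub_add_cancel] at h'
    exact le_trans h' (key2 n h)
  -- find a positive element of C
  obtain ⟨c, hcC, hcP⟩ : ∃ c ∈ C, c ∈ P := by
    have : ∃ c ∈ C, c ≠ 1 := by
      by_contra h
      push_neg at h
      exact hbot ((Subgroup.eq_bot_iff_forall C).mpr h)
    obtain ⟨c, hcC, hc1⟩ := this
    rcases hP.2.1 c with h | h | h
    · exact ⟨c, hcC, h⟩
    · exact ⟨c⁻¹, C.inv_mem hcC, h⟩
    · exact absurd h hc1
  obtain ⟨m, hm⟩ := hunion c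
  obtain ⟨hptm, hmin⟩ := hD m
  -- the minimal positive element lies in C
  have hptC : pt m ∈ C := by
    apply hC 1 C.one_mem c hcC (pt m)
    · rw [inv_one, one_mul]; exact Or.inl hptm.1
    · rcases hmin c ⟨hcP, hm⟩ with h | h
      · right; simp [h]
      · exact Or.inl h
  obtain ⟨ℓ, hmℓ, hℓ⟩ := hC3 m
  have hbase : An (ℓ : ℤ) ≤ C :=
    le_trans (hℓ (C ⊓ GM ℓ) (hconv ℓ)
      (Subgroup.mem_inf.mpr ⟨hptC, hGMmono m ℓ hmℓ hptm.2⟩)) inf_le_left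
  -- propagate to all n
  have hall : ∀ n : ℤ, An n ≤ C := by
    have up : ∀ k : ℕ, An ((ℓ : ℤ) + k) ≤ C := by
      intro k
      induction k with
      | zero => simpa using hbase
      | succ k ih =>
        have := step_up _ ih
        have e : (ℓ : ℤ) + k + 1 = (ℓ : ℤ) + (k + 1 : ℕ) := by push_cast; ring
        rwa [e] at this
    have down : ∀ k : ℕ, An ((ℓ : ℤ) - k) ≤ C := by
      intro k
      induction k with
      | zero => simpa using hbase
      | succ k ih =>
        have := step_down _ ih
        have e : (ℓ : ℤ) - k - 1 = (ℓ : ℤ) - (k + 1 : ℕ) := by push_cast; ring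
        rwa [e] at this
    intro n
    rcases le_or_gt (ℓ : ℤ) n with h | h
    · have := up (n - ℓ).toNat
      rwa [Int.toNat_of_nonneg (by omega), add_sub_cancel] at this
    · have := down ((ℓ : ℤ) - n).toNat
      rwa [Int.toNat_of_nonneg (by omega), sub_sub_cancel] at this
  -- conclude C = ⊤
  rw [eq_top_iff]
  intro x _
  obtain ⟨m', hm'⟩ := hunion x
  have hle : GM m' ≤ C := by
    rw [hGM m', Subgroup.closure_le]
    intro y hy
    simp only [Set.mem_iUnion, Set.mem_setOf_eq] at hy
    obtain ⟨j, _, hyj⟩ := hy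
    exact key2 j (hall j) hyj
  exact hle hm'
end

section
/- Let G be a non-abelian group with positive cone P. Let (G_n)_{n ∈ ℤ} and (A_n)_{n ∈ ℤ} be families of subgroups of G such that A_n ⊆ G_n and A_n ⊆ G_{n+1} for all n ∈ ℤ. For each m ≥ 0 let G_(m) be the subgroup of G generated by the union of the G_j for |j| ≤ m, and set P_(m) := P ∩ G_(m); assume that the union of the G_(m) over all m ≥ 0 is G. Assume that P has no minimal positive element (for every p ∈ P there exists q ∈ P with q ≠ p and q⁻¹p ∈ P). Assume further: (D) for every m ≥ 0 there exists p̃_m ∈ P_(m) such that every q ∈ P_(m) satisfies q = p̃_m or p̃_m⁻¹ · q ∈ P; (C1) for every n ∈ ℤ there exists m ≥ 0 with G_n ∪ G_{n+1} ⊆ G_(m) such that every subgroup of G_(m) convex with respect to P_(m) that contains A_n also contains G_{n+1}; (C2) for every n ∈ ℤ there exists m ≥ 0 with G_n ∪ G_{n+1} ⊆ G_(m) such that every subgroup of G_(m) convex with respect to P_(m) that contains A_n also contains G_n; (C3) for every m ≥ 0 there exists an integer ℓ ≥ m such that every subgroup of G_(ℓ) convex with respect to P_(ℓ) that contains p̃_m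 also contains A_ℓ. Then P is approximated by its conjugates: for every finite subset S ⊆ P there exists g ∈ G such that g·s·g⁻¹ ∈ P for all s ∈ S and g⁻¹Pg ≠ P. In particular P is not isolated. -/
namespace Stmt7Aux

variable {G : Type*} [Group G]

/-- `P ∪ {1}`. -/
def PU (P : Set G) : Set G := P ∪ {1}

lemma mem_PU_of_mem {P : Set G} {x : G} (h : x ∈ P) : x ∈ PU P := Or.inl h

lemma one_mem_PU (P : Set G) : (1 : G) ∈ PU P := Or.inr rfl

lemma PU_mul {P : Set G} (hP : IsPositiveCone P) {x y : G}
    (hx : x ∈ PU P) (hy : y ∈ PU P) : x * y ∈ PU P := by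
  rcases hx with hx | hx
  · rcases hy with hy | hy
    · exact Or.inl (hP.1 x hx y hy)
    · simp only [Set.mem_singleton_iff] at hy; subst hy; rw [mul_one]; exact Or.inl hx
  · simp only [Set.mem_singleton_iff] at hx; subst hx; rwa [one_mul]

lemma PU_mul_P {P : Set G} (hP : IsPositiveCone P) {x y : G}
    (hx : x ∈ PU P) (hy : y ∈ P) : x * y ∈ P := by
  rcases hx with hx | hx
  · exact hP.1 x hx y hy
  · simp only [Set.mem_singleton_iff] at hx; subst hx; rwa [one_mul]

lemma P_mul_PU {P : Set G} (hP : IsPositiveCone P) {x y : G}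
    (hx : x ∈ P) (hy : y ∈ PU P) : x * y ∈ P := by
  rcases hy with hy | hy
  · exact hP.1 x hx y hy
  · simp only [Set.mem_singleton_iff] at hy; subst hy; rwa [mul_one]

/-- `h` normalizes the positive cone `P`. -/
def Nrm (P : Set G) (h : G) : Prop := ∀ x ∈ P, h * x * h⁻¹ ∈ P ∧ h⁻¹ * x * h ∈ P

lemma Nrm.one (P : Set G) : Nrm P (1 : G) := by
  intro x hx; constructor <;> simpa using hx

lemma Nrm.inv {P : Set G} {h : G} (hh : Nrm P h) : Nrm P h⁻¹ := by
  intro x hx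
  rw [inv_inv]
  exact ⟨(hh x hx).2, (hh x hx).1⟩

lemma Nrm.mul {P : Set G} {g h : G} (hg : Nrm P g) (hh : Nrm P h) : Nrm P (g * h) := by
  intro x hx
  constructor
  · have := (hg _ (hh x hx).1).1
    rwa [show g * (h * x * h⁻¹) * g⁻¹ = (g * h) * x * (g * h)⁻¹ by group] at this
  · have := (hh _ (hg x hx).2).2
    rwa [show h⁻¹ * (g⁻¹ * x * g) * h = (g * h)⁻¹ * x * (g * h) by group] at this

lemma Nrm.pow {P : Set G} {h : G} (hh : Nrm P h) (n : ℕ) : Nrm P (h ^ n) := by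
  induction n with
  | zero => simpa using Nrm.one P
  | succ k ih => rw [pow_succ]; exact ih.mul hh

lemma Nrm.conj_PU {P : Set G} {h x : G} (hh : Nrm P h) (hx : x ∈ PU P) :
    h * x * h⁻¹ ∈ PU P := by
  rcases hx with hx | hx
  · exact Or.inl (hh x hx).1
  · simp only [Set.mem_singleton_iff] at hx; subst hx
    right; simp

lemma Nrm.conj_PU' {P : Set G} {h x : G} (hh : Nrm P h) (hx : x ∈ PU P) :
    h⁻¹ * x * h ∈ PU P := by
  have := hh.inv.conj_PU hx
  simpa using this

lemma pow_mem_PU {P : Set G} (hP : IsPositiveCone P) {b : G} (hb : b ∈ P) (n : ℕ) :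
    b ^ n ∈ PU P := by
  induction n with
  | zero => rw [pow_zero]; exact Or.inr rfl
  | succ k ih => rw [pow_succ]; exact PU_mul hP ih (Or.inl hb)

/-- `x ≤ y` and `z ≤ w` implies `x*z ≤ y*w` (given global conjugation invariance). -/
lemma mul_le_mul4 {P : Set G} (hP : IsPositiveCone P) (hN : ∀ h : G, Nrm P h)
    {x y z w : G} (h1 : x⁻¹ * y ∈ PU P) (h2 : z⁻¹ * w ∈ PU P) :
    (x * z)⁻¹ * (y * w) ∈ PU P := by
  have hc : w⁻¹ * (x⁻¹ * y) * w ∈ PU P := (hN w).conj_PU' h1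
  have := PU_mul hP h2 hc
  rwa [show (z⁻¹ * w) * (w⁻¹ * (x⁻¹ * y) * w) = (x * z)⁻¹ * (y * w) by group] at this

/-- strict version: `x < y` and `z ≤ w` implies `x*z < y*w`. -/
lemma mul_lt_mul4 {P : Set G} (hP : IsPositiveCone P) (hN : ∀ h : G, Nrm P h)
    {x y z w : G} (h1 : x⁻¹ * y ∈ P) (h2 : z⁻¹ * w ∈ PU P) :
    (x * z)⁻¹ * (y * w) ∈ P := by
  have hc : w⁻¹ * (x⁻¹ * y) * w ∈ P := (hN w (x⁻¹ * y) h1).2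
  have := PU_mul_P hP h2 hc
  rwa [show (z⁻¹ * w) * (w⁻¹ * (x⁻¹ * y) * w) = (x * z)⁻¹ * (y * w) by group] at this


lemma GM_mono {Gn : ℤ → Subgroup G} {GM : ℕ → Subgroup G}
    (hGM : ∀ m : ℕ,
      GM m = Subgroup.closure (⋃ j ∈ {j : ℤ | |j| ≤ (m : ℤ)}, (Gn j : Set G)))
    {k l : ℕ} (h : k ≤ l) : GM k ≤ GM l := by
  rw [hGM k, hGM l]
  apply Subgroup.closure_mono
  apply Set.biUnion_subset_biUnion_left
  intro j hj
  simp only [Set.mem_setOf_eq] at hj ⊢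
  omega

lemma convexTop {P : Set G}
    (Gn An : ℤ → Subgroup G)
    (hAn : ∀ n : ℤ, An n ≤ Gn n) (hAn' : ∀ n : ℤ, An n ≤ Gn (n + 1))
    (GM : ℕ → Subgroup G)
    (hGM : ∀ m : ℕ,
      GM m = Subgroup.closure (⋃ j ∈ {j : ℤ | |j| ≤ (m : ℤ)}, (Gn j : Set G)))
    (hunion : ∀ x : G, ∃ m : ℕ, x ∈ GM m)
    (pt : ℕ → G)
    (hD : ∀ m : ℕ, pt m ∈ P ∩ (GM m : Set G) ∧
      ∀ q ∈ P ∩ (GM m : Set G), q = pt m ∨ (pt m)⁻¹ * q ∈ P)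
    (hC1 : ∀ n : ℤ, ∃ m : ℕ, Gn n ≤ GM m ∧ Gn (n + 1) ≤ GM m ∧
      ∀ C : Subgroup G, IsConvexIn (GM m) (P ∩ (GM m : Set G)) C →
        An n ≤ C → Gn (n + 1) ≤ C)
    (hC2 : ∀ n : ℤ, ∃ m : ℕ, Gn n ≤ GM m ∧ Gn (n + 1) ≤ GM m ∧
      ∀ C : Subgroup G, IsConvexIn (GM m) (P ∩ (GM m : Set G)) C →
        An n ≤ C → Gn n ≤ C)
    (hC3 : ∀ m : ℕ, ∃ ℓ : ℕ, m ≤ ℓ ∧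
      ∀ C : Subgroup G, IsConvexIn (GM ℓ) (P ∩ (GM ℓ : Set G)) C →
        pt m ∈ C → An (ℓ : ℤ) ≤ C)
    (C : Subgroup G) (hC : IsConvex P C) {p : G} (hp : p ∈ P) (hpC : p ∈ C) :
    ∀ x : G, x ∈ C := by
  have hrestrict : ∀ k : ℕ, IsConvexIn (GM k) (P ∩ (GM k : Set G)) (C ⊓ GM k) := by
    intro k
    refine ⟨inf_le_right, ?_⟩
    intro c₁ hc₁ c₂ hc₂ g hg h1 h2
    rw [Subgroup.mem_inf] at hc₁ hc₂
    refine Subgroup.mem_inf.mpr ⟨hC c₁ hc₁.1 c₂ hc₂.1 g ?_ ?_, hg⟩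
    · rcases h1 with h | h
      · exact Or.inl h.1
      · exact Or.inr h
    · rcases h2 with h | h
      · exact Or.inl h.1
      · exact Or.inr h
  obtain ⟨ℓ₀, hpℓ⟩ := hunion p
  have hpt := (hD ℓ₀).1
  have hptC : pt ℓ₀ ∈ C := by
    apply hC 1 C.one_mem p hpC (pt ℓ₀)
    · left; simpa using hpt.1
    · rcases (hD ℓ₀).2 p ⟨hp, hpℓ⟩ with h | h
      · right; simp [h]
      · exact Or.inl h
  obtain ⟨ℓ₁, hℓ₁, hstep3⟩ := hC3 ℓ₀
  have hAℓ₁ : An (ℓ₁ : ℤ) ≤ C := by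
    have := hstep3 (C ⊓ GM ℓ₁) (hrestrict ℓ₁)
      (Subgroup.mem_inf.mpr ⟨hptC, GM_mono hGM hℓ₁ hpt.2⟩)
    exact this.trans inf_le_left
  have upStep : ∀ n : ℤ, An n ≤ C → An (n + 1) ≤ C := by
    intro n hn
    obtain ⟨m₁, hg1, _, hs⟩ := hC1 n
    have hGn : Gn (n + 1) ≤ C :=
      (hs (C ⊓ GM m₁) (hrestrict m₁) (le_inf hn ((hAn n).trans hg1))).trans inf_le_left
    exact (hAn (n + 1)).trans hGn
  have downStep : ∀ n : ℤ, An n ≤ C → An (n - 1) ≤ C := by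
    intro n hn
    obtain ⟨m₂, hg1, _, hs⟩ := hC2 n
    have hGn : Gn n ≤ C :=
      (hs (C ⊓ GM m₂) (hrestrict m₂) (le_inf hn ((hAn n).trans hg1))).trans inf_le_left
    have h := hAn' (n - 1)
    rw [sub_add_cancel] at h
    exact h.trans hGn
  have hAll : ∀ n : ℤ, An n ≤ C := by
    have up : ∀ k : ℕ, An ((ℓ₁ : ℤ) + (k : ℤ)) ≤ C := by
      intro k
      induction k with
      | zero => simpa using hAℓ₁
      | succ k ih =>
        have := upStep _ ih
        rwa [show ((ℓ₁ : ℤ) + (k : ℤ)) + 1 = (ℓ₁ : ℤ) + ((k + 1 : ℕ) : ℤ) by push_cast; ring]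
          at this
    have down : ∀ k : ℕ, An ((ℓ₁ : ℤ) - (k : ℤ)) ≤ C := by
      intro k
      induction k with
      | zero => simpa using hAℓ₁
      | succ k ih =>
        have := downStep _ ih
        rwa [show ((ℓ₁ : ℤ) - (k : ℤ)) - 1 = (ℓ₁ : ℤ) - ((k + 1 : ℕ) : ℤ) by push_cast; ring]
          at this
    intro n
    rcases le_total (ℓ₁ : ℤ) n with h | h
    · have := up (n - (ℓ₁ : ℤ)).toNat
      rwa [show (ℓ₁ : ℤ) + ((n - (ℓ₁ : ℤ)).toNat : ℤ) = n by
        rw [Int.toNat_of_nonneg (by omega)]; ring] at this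
    · have := down ((ℓ₁ : ℤ) - n).toNat
      rwa [show (ℓ₁ : ℤ) - (((ℓ₁ : ℤ) - n).toNat : ℤ) = n by
        rw [Int.toNat_of_nonneg (by omega)]; ring] at this
  have hGnAll : ∀ n : ℤ, Gn n ≤ C := by
    intro n
    obtain ⟨m₂, hg1, _, hs⟩ := hC2 n
    exact (hs (C ⊓ GM m₂) (hrestrict m₂) (le_inf (hAll n) ((hAn n).trans hg1))).trans inf_le_left
  intro x
  obtain ⟨k, hk⟩ := hunion x
  have hle : GM k ≤ C := by
    rw [hGM k]
    refine (Subgroup.closure_le C).2 ?_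
    intro y hy
    simp only [Set.mem_iUnion] at hy
    obtain ⟨j, _, hyj⟩ := hy
    exact hGnAll j hyj
  exact hle hk


/-- The subgroup of elements bounded between powers of `b`. -/
def boundedCone (P : Set G) (hP : IsPositiveCone P) {b : G} (hb : b ∈ P)
    (hNb : Nrm P b) : Subgroup G where
  carrier := {g | ∃ n : ℕ, g⁻¹ * b ^ n ∈ PU P ∧ b ^ n * g ∈ PU P}
  one_mem' := ⟨0, by simp [one_mem_PU]⟩
  mul_mem' := by
    rintro g h ⟨n, hg1, hg2⟩ ⟨k, hh1, hh2⟩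
    refine ⟨n + k, ?_, ?_⟩
    · have t1 : (b ^ k)⁻¹ * (g⁻¹ * b ^ n) * (b ^ k) ∈ PU P := (hNb.pow k).conj_PU' hg1
      have t2 := PU_mul hP hh1 t1
      rwa [show (h⁻¹ * b ^ k) * ((b ^ k)⁻¹ * (g⁻¹ * b ^ n) * (b ^ k))
          = (g * h)⁻¹ * (b ^ n * b ^ k) by group, ← pow_add] at t2
    · have t1 : (b ^ k) * (b ^ n * g) * (b ^ k)⁻¹ ∈ PU P := (hNb.pow k).conj_PU hg2
      have t2 := PU_mul hP t1 hh2
      rwa [show ((b ^ k) * (b ^ n * g) * (b ^ k)⁻¹) * (b ^ k * h)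
          = (b ^ k * b ^ n) * (g * h) by group, ← pow_add, show k + n = n + k by omega] at t2
  inv_mem' := by
    rintro g ⟨n, h1, h2⟩
    refine ⟨n, ?_, ?_⟩
    · have := (hNb.pow n).conj_PU' h2
      rwa [show (b ^ n)⁻¹ * (b ^ n * g) * (b ^ n) = g⁻¹⁻¹ * b ^ n by group] at this
    · have := (hNb.pow n).conj_PU h1
      rwa [show (b ^ n) * (g⁻¹ * b ^ n) * (b ^ n)⁻¹ = b ^ n * g⁻¹ by group] at this

lemma mem_boundedCone {P : Set G} (hP : IsPositiveCone P) {b : G} (hb : b ∈ P)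
    (hNb : Nrm P b) (g : G) :
    g ∈ boundedCone P hP hb hNb ↔ ∃ n : ℕ, g⁻¹ * b ^ n ∈ PU P ∧ b ^ n * g ∈ PU P :=
  Iff.rfl

lemma boundedCone_convex {P : Set G} (hP : IsPositiveCone P) {b : G} (hb : b ∈ P)
    (hNb : Nrm P b) : IsConvex P (boundedCone P hP hb hNb) := by
  intro c₁ hc₁ c₂ hc₂ g h1 h2
  obtain ⟨n₁, hc11, hc12⟩ := hc₁
  obtain ⟨n₂, hc21, hc22⟩ := hc₂
  refine ⟨n₂ + n₁, ?_, ?_⟩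
  · have := PU_mul hP (PU_mul hP h2 hc21) (pow_mem_PU hP hb n₁)
    rwa [show ((g⁻¹ * c₂) * (c₂⁻¹ * b ^ n₂)) * b ^ n₁ = g⁻¹ * (b ^ n₂ * b ^ n₁) by group,
      ← pow_add] at this
  · have := PU_mul hP (PU_mul hP (pow_mem_PU hP hb n₂) hc12) h1
    rwa [show ((b ^ n₂) * (b ^ n₁ * c₁)) * (c₁⁻¹ * g) = (b ^ n₂ * b ^ n₁) * g by group,
      ← pow_add] at this

lemma self_mem_boundedCone {P : Set G} (hP : IsPositiveCone P) {b : G} (hb : b ∈ P)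
    (hNb : Nrm P b) : b ∈ boundedCone P hP hb hNb := by
  refine ⟨1, ?_, ?_⟩
  · rw [pow_one, inv_mul_cancel]; exact one_mem_PU P
  · rw [pow_one]; exact Or.inl (hP.1 b hb b hb)

lemma exists_noncomm {P : Set G} (hP : IsPositiveCone P) (hna : ∃ x y : G, x * y ≠ y * x) :
    ∃ a ∈ P, ∃ b ∈ P, a * b ≠ b * a := by
  by_contra hcon
  push_neg at hcon
  obtain ⟨x, y, hxy⟩ := hna
  apply hxy
  have key : ∀ u v : G, u ∈ P → Commute u v := by
    intro u v hu
    rcases hP.2.1 v with hv | hv | hv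
    · exact hcon u hu v hv
    · have h : Commute u v⁻¹ := hcon u hu v⁻¹ hv
      simpa using h.inv_right
    · rw [hv]; exact Commute.one_right u
  have key2 : ∀ u v : G, Commute u v := by
    intro u v
    rcases hP.2.1 u with hu | hu | hu
    · exact key u v hu
    · have h : Commute u⁻¹ v := key u⁻¹ v hu
      simpa using h.inv_left
    · rw [hu]; exact Commute.one_left v
  exact (key2 x y).eq

lemma squeeze {P : Set G} (hP : IsPositiveCone P)
    (hN : ∀ h : G, Nrm P h)
    (harch : ∀ x ∈ P, ∀ g : G, ∃ n : ℕ, g⁻¹ * x ^ n ∈ PU P ∧ x ^ n * g ∈ PU P)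
    (hdense : ∀ p ∈ P, ∃ q ∈ P, q ≠ p ∧ q⁻¹ * p ∈ P)
    {a b : G} (ha : a ∈ P) (hb : b ∈ P) (hc : (a * b) * (b * a)⁻¹ ∈ P) : False := by
  classical
  obtain ⟨e, heP, hne, helt⟩ := hdense ((a * b) * (b * a)⁻¹) hc
  have hdP : e⁻¹ * ((a * b) * (b * a)⁻¹) ∈ P := helt
  obtain ⟨ε, hεP, hεsq⟩ : ∃ ε ∈ P, (ε * ε)⁻¹ * ((a * b) * (b * a)⁻¹) ∈ PU P := by
    rcases hP.2.1 (e⁻¹ * (e⁻¹ * ((a * b) * (b * a)⁻¹))) with h | h | h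
    · refine ⟨e, heP, ?_⟩
      rw [show (e * e)⁻¹ * ((a * b) * (b * a)⁻¹)
          = e⁻¹ * (e⁻¹ * ((a * b) * (b * a)⁻¹)) by
        simp [mul_inv_rev, mul_assoc]]
      exact Or.inl h
    · refine ⟨e⁻¹ * ((a * b) * (b * a)⁻¹), hdP, ?_⟩
      have h' : (e⁻¹ * ((a * b) * (b * a)⁻¹))⁻¹ * e ∈ P := by
        rwa [show (e⁻¹ * (e⁻¹ * ((a * b) * (b * a)⁻¹)))⁻¹
            = (e⁻¹ * ((a * b) * (b * a)⁻¹))⁻¹ * e by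
          simp [mul_inv_rev, mul_assoc]] at h
      have h2 := (hN (e⁻¹ * ((a * b) * (b * a)⁻¹))
        ((e⁻¹ * ((a * b) * (b * a)⁻¹))⁻¹ * e) h').2
      refine Or.inl ?_
      rwa [show (e⁻¹ * ((a * b) * (b * a)⁻¹))⁻¹ * ((e⁻¹ * ((a * b) * (b * a)⁻¹))⁻¹ * e)
            * (e⁻¹ * ((a * b) * (b * a)⁻¹))
          = ((e⁻¹ * ((a * b) * (b * a)⁻¹)) * (e⁻¹ * ((a * b) * (b * a)⁻¹)))⁻¹
            * ((a * b) * (b * a)⁻¹) by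
        simp [mul_inv_rev, mul_assoc]] at h2
    · refine ⟨e, heP, ?_⟩
      right
      rw [show (e * e)⁻¹ * ((a * b) * (b * a)⁻¹)
          = e⁻¹ * (e⁻¹ * ((a * b) * (b * a)⁻¹)) by
        simp [mul_inv_rev, mul_assoc]]
      exact h
  have hbound : ∀ x ∈ P, ∃ m : ℕ, (ε ^ m)⁻¹ * x ∈ PU P ∧ x⁻¹ * ε ^ (m + 1) ∈ P := by
    intro x hx
    obtain ⟨K, hK1, _⟩ := harch ε hεP x
    set Q : ℕ → Prop := fun k => (ε ^ k)⁻¹ * x ∈ PU P with hQdef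
    have hQ0 : Q 0 := by
      show (ε ^ 0)⁻¹ * x ∈ PU P
      rw [pow_zero, inv_one, one_mul]; exact Or.inl hx
    have hQm : Q (Nat.findGreatest Q K) := Nat.findGreatest_spec (Nat.zero_le K) hQ0
    set m := Nat.findGreatest Q K with hmdef
    refine ⟨m, hQm, ?_⟩
    by_cases hcase : m + 1 ≤ K
    · have hnot : ¬ Q (m + 1) := Nat.findGreatest_is_greatest (Nat.lt_succ_self m) hcase
      have hnot' : ¬ ((ε ^ (m + 1))⁻¹ * x ∈ PU P) := hnot
      rcases hP.2.1 ((ε ^ (m + 1))⁻¹ * x) with h | h | h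
      · exact absurd (Or.inl h) hnot'
      · rwa [show ((ε ^ (m + 1))⁻¹ * x)⁻¹ = x⁻¹ * ε ^ (m + 1) by group] at h
      · exact absurd (Or.inr h) hnot'
    · have hmK : m = K := le_antisymm (Nat.findGreatest_le K) (by omega)
      have h1 : x⁻¹ * ε ^ m ∈ PU P := by rw [hmK]; exact hK1
      have h2 := PU_mul_P hP h1 hεP
      rwa [pow_succ, ← mul_assoc]
  obtain ⟨m, hma, hma'⟩ := hbound a ha
  obtain ⟨n, hnb, hnb'⟩ := hbound b hb
  have h1 : (a * b)⁻¹ * (ε ^ (m + 1) * ε ^ (n + 1)) ∈ P := mul_lt_mul4 hP hN hma' (Or.inl hnb')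
  have h2 : (ε ^ n * ε ^ m)⁻¹ * (b * a) ∈ PU P := mul_le_mul4 hP hN hnb hma
  have hYV : ((b * a)⁻¹)⁻¹ * (ε ^ n * ε ^ m)⁻¹ ∈ PU P := by
    have := (hN (b * a)).conj_PU h2
    rwa [show (b * a) * ((ε ^ n * ε ^ m)⁻¹ * (b * a)) * (b * a)⁻¹
        = ((b * a)⁻¹)⁻¹ * (ε ^ n * ε ^ m)⁻¹ by group] at this
  have h3 : ((a * b) * (b * a)⁻¹)⁻¹ * ((ε ^ (m + 1) * ε ^ (n + 1)) * (ε ^ n * ε ^ m)⁻¹) ∈ P :=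
    mul_lt_mul4 hP hN h1 hYV
  have hpow : (ε ^ (m + 1) * ε ^ (n + 1)) * (ε ^ n * ε ^ m)⁻¹ = ε * ε := by
    rw [← pow_add, ← pow_add, show (m + 1) + (n + 1) = (n + m) + 2 by omega, pow_add,
      pow_mul_comm, mul_inv_cancel_right, pow_two]
  rw [hpow] at h3
  rcases hεsq with h | h
  · apply hP.2.2.1 _ h
    rwa [show ((ε * ε)⁻¹ * ((a * b) * (b * a)⁻¹))⁻¹
        = ((a * b) * (b * a)⁻¹)⁻¹ * (ε * ε) by rw [mul_inv_rev, inv_inv]]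
  · simp only [Set.mem_singleton_iff] at h
    have heq : ε * ε = (a * b) * (b * a)⁻¹ := inv_mul_eq_one.mp h
    rw [heq] at h3
    rw [inv_mul_cancel] at h3
    exact hP.2.2.2 h3

end Stmt7Aux

open Stmt7Aux

theorem stmt7 {G : Type*} [Group G] (P : Set G) (hP : IsPositiveCone P)
    -- `G` is non-abelian
    (hna : ∃ x y : G, x * y ≠ y * x)
    (Gn An : ℤ → Subgroup G)
    (hAn : ∀ n : ℤ, An n ≤ Gn n) (hAn' : ∀ n : ℤ, An n ≤ Gn (n + 1))
    (GM : ℕ → Subgroup G)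
    (hGM : ∀ m : ℕ,
      GM m = Subgroup.closure (⋃ j ∈ {j : ℤ | |j| ≤ (m : ℤ)}, (Gn j : Set G)))
    (hunion : ∀ x : G, ∃ m : ℕ, x ∈ GM m)
    -- `P` has no minimal positive element
    (hdense : ∀ p ∈ P, ∃ q ∈ P, q ≠ p ∧ q⁻¹ * p ∈ P)
    -- (D) : each `P_(m) = P ∩ G_(m)` is discrete with minimal positive element `pt m`
    (pt : ℕ → G)
    (hD : ∀ m : ℕ, pt m ∈ P ∩ (GM m : Set G) ∧
      ∀ q ∈ P ∩ (GM m : Set G), q = pt m ∨ (pt m)⁻¹ * q ∈ P)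
    -- (C1)
    (hC1 : ∀ n : ℤ, ∃ m : ℕ, Gn n ≤ GM m ∧ Gn (n + 1) ≤ GM m ∧
      ∀ C : Subgroup G, IsConvexIn (GM m) (P ∩ (GM m : Set G)) C →
        An n ≤ C → Gn (n + 1) ≤ C)
    -- (C2)
    (hC2 : ∀ n : ℤ, ∃ m : ℕ, Gn n ≤ GM m ∧ Gn (n + 1) ≤ GM m ∧
      ∀ C : Subgroup G, IsConvexIn (GM m) (P ∩ (GM m : Set G)) C →
        An n ≤ C → Gn n ≤ C)
    -- (C3)
    (hC3 : ∀ m : ℕ, ∃ ℓ : ℕ, m ≤ ℓ ∧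
      ∀ C : Subgroup G, IsConvexIn (GM ℓ) (P ∩ (GM ℓ : Set G)) C →
        pt m ∈ C → An (ℓ : ℤ) ≤ C) :
    -- `P` is approximated by its conjugates …
    (∀ S : Finset G, (S : Set G) ⊆ P → ∃ g : G,
      (∀ s ∈ S, g * s * g⁻¹ ∈ P) ∧ (fun x => g⁻¹ * x * g) '' P ≠ P) ∧
    -- … in particular `P` is not isolated
    ¬ ∃ S : Finset G, (S : Set G) ⊆ P ∧
      ∀ Q : Set G, IsPositiveCone Q → (S : Set G) ⊆ Q → Q = P := by
  have main : ∀ S : Finset G, (S : Set G) ⊆ P → ∃ g : G,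
      (∀ s ∈ S, g * s * g⁻¹ ∈ P) ∧ (fun x => g⁻¹ * x * g) '' P ≠ P := by
    intro S hS
    by_contra hcon
    push_neg at hcon
    -- choose a level `m` containing all of `S`
    obtain ⟨m, hSm⟩ : ∃ m : ℕ, ∀ s ∈ S, s ∈ GM m := by
      classical
      refine ⟨S.sup fun s => (hunion s).choose, fun s hs => ?_⟩
      exact GM_mono hGM (Finset.le_sup hs) (hunion s).choose_spec
    have hqP : pt m ∈ P := (hD m).1.1
    have hq_min : ∀ s ∈ S, (pt m)⁻¹ * s ∈ PU P := by
      intro s hs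
      rcases (hD m).2 s ⟨hS (Finset.mem_coe.mpr hs), hSm s hs⟩ with h | h
      · right; simp [h]
      · exact Or.inl h
    -- every positive element below `pt m` normalizes `P`
    have hNrm_le : ∀ a ∈ P, a⁻¹ * pt m ∈ PU P → Nrm P a := by
      intro a ha hle
      have hcond : ∀ s ∈ S, a⁻¹ * s * (a⁻¹)⁻¹ ∈ P := by
        intro s hs
        have h1 : a⁻¹ * s ∈ PU P := by
          have := PU_mul hP hle (hq_min s hs)
          rwa [show (a⁻¹ * pt m) * ((pt m)⁻¹ * s) = a⁻¹ * s by group] at this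
        have h2 := PU_mul_P hP h1 ha
        rwa [inv_inv]
      have himg := hcon a⁻¹ hcond
      simp only [inv_inv] at himg
      intro x hx
      constructor
      · have hmem : a * x * a⁻¹ ∈ (fun x => a * x * a⁻¹) '' P := ⟨x, hx, rfl⟩
        rwa [himg] at hmem
      · have hx' : x ∈ (fun x => a * x * a⁻¹) '' P := by rw [himg]; exact hx
        obtain ⟨y, hy, hxy⟩ := hx'
        have : a⁻¹ * x * a = y := by rw [← hxy]; group
        rw [this]; exact hy
    have hNq : Nrm P (pt m) :=
      hNrm_le (pt m) hqP (by rw [inv_mul_cancel]; exact Or.inr rfl)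
    -- the archimedean machine, from the convex-subgroup machinery
    have harch0 : ∀ x ∈ P, Nrm P x → ∀ g : G, ∃ n : ℕ,
        g⁻¹ * x ^ n ∈ PU P ∧ x ^ n * g ∈ PU P := by
      intro x hx hNx g
      exact convexTop Gn An hAn hAn' GM hGM hunion pt hD hC1 hC2 hC3
        (boundedCone P hP hx hNx) (boundedCone_convex hP hx hNx) hx
        (self_mem_boundedCone hP hx hNx) g
    -- every element of `P` normalizes `P`
    have hNP : ∀ x ∈ P, Nrm P x := by
      have key : ∀ n : ℕ, ∀ x ∈ P, x⁻¹ * (pt m) ^ n ∈ PU P → Nrm P x := by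
        intro n
        induction n with
        | zero =>
          intro x hx hb
          rw [pow_zero, mul_one] at hb
          rcases hb with h | h
          · exact absurd h (hP.2.2.1 x hx)
          · simp only [Set.mem_singleton_iff, inv_eq_one] at h
            exact absurd (h ▸ hx) hP.2.2.2
        | succ k ih =>
          intro x hx hb
          rcases hP.2.1 (x⁻¹ * pt m) with h | h | h
          · exact hNrm_le x hx (Or.inl h)
          · have hy : (pt m)⁻¹ * x ∈ P := by rwa [mul_inv_rev, inv_inv] at h
            have hy' : ((pt m)⁻¹ * x)⁻¹ * (pt m) ^ k ∈ PU P := by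
              rw [show ((pt m)⁻¹ * x)⁻¹ * (pt m) ^ k = x⁻¹ * ((pt m) * (pt m) ^ k) by group,
                ← pow_succ']
              exact hb
            have hNy := ih _ hy hy'
            have hmul := hNq.mul hNy
            rwa [show pt m * ((pt m)⁻¹ * x) = x by group] at hmul
          · have hxq : x = pt m := by
              have h' := inv_mul_eq_one.mp h
              exact h'.symm ▸ rfl
            rw [hxq]; exact hNq
      intro x hx
      obtain ⟨n, hn, _⟩ := harch0 (pt m) hqP hNq x
      exact key n x hx hn
    have hN : ∀ h : G, Nrm P h := by
      intro h
      rcases hP.2.1 h with hh | hh | hh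
      · exact hNP h hh
      · have := (hNP h⁻¹ hh).inv
        rwa [inv_inv] at this
      · rw [hh]; exact Nrm.one P
    have harch : ∀ x ∈ P, ∀ g : G, ∃ n : ℕ,
        g⁻¹ * x ^ n ∈ PU P ∧ x ^ n * g ∈ PU P :=
      fun x hx => harch0 x hx (hNP x hx)
    obtain ⟨a, ha, b, hb, hab⟩ := exists_noncomm hP hna
    rcases hP.2.1 ((a * b) * (b * a)⁻¹) with h | h | h
    · exact squeeze hP hN harch hdense ha hb h
    · have h' : (b * a) * (a * b)⁻¹ ∈ P := by
        rwa [show ((a * b) * (b * a)⁻¹)⁻¹ = (b * a) * (a * b)⁻¹ by group] at h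
      exact squeeze hP hN harch hdense hb ha h'
    · exact hab (mul_inv_eq_one.mp h)
  refine ⟨main, ?_⟩
  rintro ⟨S, hSP, hiso⟩
  obtain ⟨g, hg1, hg2⟩ := main S hSP
  have hcone : IsPositiveCone ((fun x => g⁻¹ * x * g) '' P) := by
    refine ⟨?_, ?_, ?_, ?_⟩
    · rintro _ ⟨x, hx, rfl⟩ _ ⟨y, hy, rfl⟩
      refine ⟨x * y, hP.1 x hx y hy, ?_⟩
      dsimp only
      group
    · intro z
      rcases hP.2.1 (g * z * g⁻¹) with h | h | h
      · exact Or.inl ⟨g * z * g⁻¹, h, by dsimp only; group⟩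
      · exact Or.inr (Or.inl ⟨(g * z * g⁻¹)⁻¹, h, by dsimp only; group⟩)
      · refine Or.inr (Or.inr ?_)
        have hz : z = g⁻¹ * (g * z * g⁻¹) * g := by group
        rw [h] at hz
        simpa using hz
    · rintro _ ⟨x, hx, rfl⟩ ⟨y, hy, hyx⟩
      dsimp only at hyx
      have h2 : g * (g⁻¹ * y * g) * g⁻¹ = g * (g⁻¹ * x * g)⁻¹ * g⁻¹ := by rw [hyx]
      rw [show g * (g⁻¹ * y * g) * g⁻¹ = y by group,
        show g * (g⁻¹ * x * g)⁻¹ * g⁻¹ = x⁻¹ by group] at h2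
      exact hP.2.2.1 x hx (h2 ▸ hy)
    · rintro ⟨x, hx, hx1⟩
      dsimp only at hx1
      have h2 : x = g * (g⁻¹ * x * g) * g⁻¹ := by group
      rw [hx1] at h2
      simp only [mul_one] at h2
      rw [mul_inv_cancel] at h2
      exact hP.2.2.2 (h2 ▸ hx)
  have hsub : (S : Set G) ⊆ (fun x => g⁻¹ * x * g) '' P := by
    intro s hs
    exact ⟨g * s * g⁻¹, hg1 s (Finset.mem_coe.mp hs), by dsimp only; group⟩
  exact hg2 (hiso _ hcone hsub)
end

section
/- Let K, G₀ and G₁ be groups and let φ₀ : K → G₀ and φ₁ : K → G₁ be injective group homomorphisms. If the amalgamated free product G₀ *_K G₁ of G₀ and G₁ over K along φ₀ and φ₁ (in Lean, Monoid.PushoutI of the family φ : ∀ i : Bool, K →* G i) is a commutative group, then φ₀ is surjective or φ₁ is surjective. -/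
theorem stmt8 {K : Type*} [Group K] {G : Bool → Type*} [∀ i, Group (G i)]
    (φ : ∀ i : Bool, K →* G i)
    (hinj : ∀ i : Bool, Function.Injective (φ i))
    (hcomm : ∀ x y : Monoid.PushoutI φ, x * y = y * x) :
    Function.Surjective (φ false) ∨ Function.Surjective (φ true) := by
  by_contra h
  push_neg at h
  obtain ⟨h0, h1⟩ := h
  rw [Function.Surjective] at h0 h1
  push_neg at h0 h1
  obtain ⟨a, ha⟩ := h0
  obtain ⟨b, hb⟩ := h1
  have har : a ∉ (φ false).range := by rintro ⟨y, rfl⟩; exact ha y rfl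
  have hbr : b ∉ (φ true).range := by rintro ⟨y, rfl⟩; exact hb y rfl
  have ha1 : a ≠ 1 := fun h => har (h ▸ (φ false).range.one_mem)
  have hb1 : b ≠ 1 := fun h => hbr (h ▸ (φ true).range.one_mem)
  have ha1' : a⁻¹ ≠ 1 := inv_ne_one.2 ha1
  have hb1' : b⁻¹ ≠ 1 := inv_ne_one.2 hb1
  let w : Monoid.CoprodI.Word G :=
    ⟨[⟨false, a⟩, ⟨true, b⟩, ⟨false, a⁻¹⟩, ⟨true, b⁻¹⟩],
      by simp_all, by simp⟩
  have hw : Monoid.PushoutI.Reduced φ w := by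
    intro g hg
    simp only [w, List.mem_cons, List.mem_singleton] at hg
    rcases hg with rfl | rfl | rfl | rfl | h
    · exact har
    · exact hbr
    · simpa using har
    · simpa using hbr
    · simp at h
  have := hw.eq_empty_of_mem_range hinj (by
    simp only [w, Monoid.CoprodI.Word.prod, List.map_cons, List.prod_cons, List.prod_nil,
      List.map_nil, map_mul, Monoid.PushoutI.ofCoprodI_of, map_inv, mul_one]
    rw [← mul_assoc, hcomm (Monoid.PushoutI.of false a) (Monoid.PushoutI.of true b)]
    group
    exact Subgroup.one_mem _)
  simp [w, Monoid.CoprodI.Word.empty] at this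
end

section
/- Fix functions k, l : ℤ → ℤ with k(n) ≥ 2 and l(n) ≥ 2 for all n ∈ ℤ, and let G̃ be the presented group with generators gₙ (n ∈ ℤ) and relations g_{n-1}^{k(n)} = g_n^{l(n)} for all n ∈ ℤ. Then G̃ is not a commutative group: there exist x, y ∈ G̃ with x·y ≠ y·x. -/
/-- The relators `g_{n-1}^{k n} * g_n^{-(l n)}` of the Dehornoy-type inductive limit. -/
def dehornoyRels (k l : ℤ → ℤ) : Set (FreeGroup ℤ) :=
  {r | ∃ n : ℤ, r = FreeGroup.of (n - 1) ^ k n * FreeGroup.of n ^ (-(l n))}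

/-- The presented group `G̃` with generators `gₙ (n : ℤ)` and relations
`g_{n-1}^{k n} = g_n^{l n}`. -/
abbrev Gtil (k l : ℤ → ℤ) : Type := PresentedGroup (dehornoyRels k l)

/-- The image `gₙ` in `G̃` of the `n`-th generator. -/
def gg (k l : ℤ → ℤ) (n : ℤ) : Gtil k l := PresentedGroup.of n

/-- The element `a_{i,m} = g_{-m}^{-(k(-m+1)-1)} ⋯ g_{i-1}^{-(k i - 1)} * g_i` of `G̃`. -/
def aElt (k l : ℤ → ℤ) (i m : ℤ) : Gtil k l :=
  (((List.range (i + m).toNat).map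
      (fun t => gg k l (-m + (t : ℤ)) ^ (-(k (-m + (t : ℤ) + 1) - 1)))).prod) * gg k l i

/-- The generating set `{a_{i,m} : m ≥ 0, -m ≤ i ≤ m}` of the positive cone. -/
def aGenSet (k l : ℤ → ℤ) : Set (Gtil k l) :=
  {x | ∃ m i : ℤ, 0 ≤ m ∧ -m ≤ i ∧ i ≤ m ∧ x = aElt k l i m}

/-- The subsemigroup `P̃` of `G̃` generated by the `a_{i,m}`, viewed as a set. -/
def Ptil (k l : ℤ → ℤ) : Set (Gtil k l) :=
  (Subsemigroup.closure (aGenSet k l) : Subsemigroup (Gtil k l))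

/-- The subgroup `G_(m)` of `G̃` generated by `g_{-m}, …, g_m`. -/
def Gsub (k l : ℤ → ℤ) (m : ℤ) : Subgroup (Gtil k l) :=
  Subgroup.closure {x | ∃ j : ℤ, -m ≤ j ∧ j ≤ m ∧ x = gg k l j}

namespace StmtTenAux

noncomputable section
open Classical

/-- Translation by `c` as a permutation of `ℝ`. -/
def naT (c : ℝ) : Equiv.Perm ℝ := Equiv.addRight c

@[simp] lemma naT_apply (c x : ℝ) : naT c x = x + c := rfl

/-- Translations as a monoid hom from `Multiplicative ℝ`. -/
def naTHom : Multiplicative ℝ →* Equiv.Perm ℝ where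
  toFun c := naT c.toAdd
  map_one' := by ext x; simp
  map_mul' a b := by ext x; simp [Equiv.Perm.mul_apply]; ring

lemma naT_zpow (c : ℝ) (m : ℤ) : naT c ^ m = naT ((m : ℝ) * c) := by
  have h1 : naT c = naTHom (Multiplicative.ofAdd c) := rfl
  have h2 : naT ((m : ℝ) * c) = naTHom (Multiplicative.ofAdd ((m : ℝ) * c)) := rfl
  rw [h1, h2, ← map_zpow, ← ofAdd_zsmul, zsmul_eq_mul]

lemma naT_injective : Function.Injective naT := by
  intro c d h
  have := congrArg (fun (e : Equiv.Perm ℝ) => e 0) h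
  simpa using this

/-- The swapping map. -/
def naH (p a x : ℝ) : ℝ :=
  if ∃ m : ℤ, x = p * m then x - a
  else if ∃ m : ℤ, x = p * m - a then x + a
  else x

variable {p a : ℝ}

lemma nolat (hp : 2 ≤ p) {x : ℝ} (h1 : 0 < x) (h2 : x < 2 * p) (h3 : x ≠ p) :
    ¬∃ m : ℤ, x = p * m := by
  rintro ⟨m, rfl⟩
  have hm : m ≤ 0 ∨ m = 1 ∨ 2 ≤ m := by omega
  rcases hm with hm | hm | hm
  · have : (m : ℝ) ≤ 0 := by exact_mod_cast hm
    nlinarith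
  · subst hm; exact h3 (by simp)
  · have : (2 : ℝ) ≤ (m : ℝ) := by exact_mod_cast hm
    nlinarith

lemma hanl (hp : 2 ≤ p) (ha0 : 0 < a) (hah : a ≤ p / 2) : ¬∃ m : ℤ, a = p * m :=
  nolat hp ha0 (by linarith) (by linarith)

lemma naH_lat (m : ℤ) : naH p a (p * m) = p * m - a := by
  unfold naH; rw [if_pos ⟨m, rfl⟩]

lemma naH_lat' (hp : 2 ≤ p) (ha0 : 0 < a) (hah : a ≤ p / 2) (m : ℤ) :
    naH p a (p * m - a) = p * m := by
  unfold naH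
  have c1 : ¬∃ m' : ℤ, p * m - a = p * m' := by
    rintro ⟨m', hm'⟩
    exact hanl hp ha0 hah ⟨m - m', by push_cast; linarith⟩
  rw [if_neg c1, if_pos ⟨m, rfl⟩]; ring

lemma naH_id {x : ℝ} (h1 : ¬∃ m : ℤ, x = p * m) (h2 : ¬∃ m : ℤ, x = p * m - a) :
    naH p a x = x := by
  unfold naH; rw [if_neg h1, if_neg h2]

lemma naH_invol (hp : 2 ≤ p) (ha0 : 0 < a) (hah : a ≤ p / 2) :
    Function.Involutive (naH p a) := by
  intro x
  by_cases h1 : ∃ m : ℤ, x = p * m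
  · obtain ⟨m, rfl⟩ := h1
    rw [naH_lat, naH_lat' hp ha0 hah]
  · by_cases h2 : ∃ m : ℤ, x = p * m - a
    · obtain ⟨m, rfl⟩ := h2
      rw [naH_lat' hp ha0 hah, naH_lat]
    · rw [naH_id h1 h2, naH_id h1 h2]

lemma naH_add_p {x : ℝ} : naH p a (x + p) = naH p a x + p := by
  have e1 : (∃ m : ℤ, x + p = p * m) ↔ (∃ m : ℤ, x = p * m) := by
    constructor
    · rintro ⟨m, hm⟩; exact ⟨m - 1, by push_cast; linarith⟩
    · rintro ⟨m, hm⟩; exact ⟨m + 1, by push_cast; linarith⟩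
  have e2 : (∃ m : ℤ, x + p = p * m - a) ↔ (∃ m : ℤ, x = p * m - a) := by
    constructor
    · rintro ⟨m, hm⟩; exact ⟨m - 1, by push_cast; linarith⟩
    · rintro ⟨m, hm⟩; exact ⟨m + 1, by push_cast; linarith⟩
  unfold naH
  by_cases h1 : ∃ m : ℤ, x = p * m
  · rw [if_pos (e1.mpr h1), if_pos h1]; ring
  · rw [if_neg (e1.not.mpr h1 |> fun h => h), if_neg h1]
    by_cases h2 : ∃ m : ℤ, x = p * m - a
    · rw [if_pos (e2.mpr h2), if_pos h2]; ring
    · rw [if_neg (fun h => h2 (e2.mp h)), if_neg h2]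

/-- Period-`p` swap as a permutation. -/
def naHe (hp : 2 ≤ p) (ha0 : 0 < a) (hah : a ≤ p / 2) : Equiv.Perm ℝ :=
  Function.Involutive.toPerm _ (naH_invol hp ha0 hah)

@[simp] lemma naHe_apply (hp : 2 ≤ p) (ha0 : 0 < a) (hah : a ≤ p / 2) (x : ℝ) :
    naHe hp ha0 hah x = naH p a x := rfl

lemma naHe_inv (hp : 2 ≤ p) (ha0 : 0 < a) (hah : a ≤ p / 2) :
    (naHe hp ha0 hah)⁻¹ = naHe hp ha0 hah := by
  rw [Equiv.Perm.inv_def]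
  exact Function.Involutive.toPerm_symm _

lemma naHe_mul_self (hp : 2 ≤ p) (ha0 : 0 < a) (hah : a ≤ p / 2) :
    naHe hp ha0 hah * naHe hp ha0 hah = 1 := by
  nth_rewrite 1 [← naHe_inv hp ha0 hah]
  exact inv_mul_cancel _

lemma naHe_comm_T (hp : 2 ≤ p) (ha0 : 0 < a) (hah : a ≤ p / 2) :
    naHe hp ha0 hah * naT p = naT p * naHe hp ha0 hah := by
  ext x
  simp only [Equiv.Perm.mul_apply, naT_apply, naHe_apply]
  exact naH_add_p

lemma conj_naT_p (hp : 2 ≤ p) (ha0 : 0 < a) (hah : a ≤ p / 2) :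
    naHe hp ha0 hah * naT p * (naHe hp ha0 hah)⁻¹ = naT p := by
  rw [naHe_comm_T hp ha0 hah, mul_assoc, mul_inv_cancel, mul_one]

/-- The key non-commutation. -/
lemma key_noncomm (hp : 2 ≤ p) (ha0 : 0 < a) (hah : a ≤ p / 2) :
    naT 1 * (naHe hp ha0 hah * naT a * naHe hp ha0 hah) ≠
      naHe hp ha0 hah * naT a * naHe hp ha0 hah * naT 1 := by
  intro hcomm
  have heval := congrArg (fun (e : Equiv.Perm ℝ) => e 0) hcomm
  simp only [Equiv.Perm.mul_apply, naT_apply, naHe_apply, zero_add] at heval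
  -- LHS : naH p a (naH p a 0 + a) + 1, RHS : naH p a (naH p a 1 + a)
  have h0 : naH p a 0 = -a := by
    have : (0 : ℝ) = p * (0 : ℤ) := by simp
    rw [this, naH_lat]; simp
  have hma : naH p a (-a) = 0 := by
    have : (-a : ℝ) = p * (0 : ℤ) - a := by simp
    rw [this, naH_lat' hp ha0 hah]; simp
  have h1pa : 1 + a ≤ p := by linarith
  rcases lt_or_eq_of_le h1pa with hlt | heqp
  · -- 1 + a < p
    have hone : naH p a 1 = 1 := by
      apply naH_id
      · exact nolat hp one_pos (by linarith) (by linarith)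
      · rintro ⟨m, hm⟩
        exact nolat hp (show (0:ℝ) < 1 + a by linarith) (by linarith) (by linarith)
          ⟨m, by linarith⟩
    by_cases h2a : 1 + 2 * a = p
    · have e : (1 + a : ℝ) = p * (1 : ℤ) - a := by push_cast; linarith
      rw [hone, h0, neg_add_cancel, h0, e, naH_lat' hp ha0 hah] at heval
      push_cast at heval
      linarith
    · have hfix : naH p a (1 + a) = 1 + a := by
        apply naH_id
        · exact nolat hp (by linarith) (by linarith) (by linarith)
        · rintro ⟨m, hm⟩
          exact nolat hp (show (0:ℝ) < 1 + 2*a by linarith) (by linarith) h2a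
            ⟨m, by linarith⟩
      rw [hone, h0, neg_add_cancel, h0, hfix] at heval
      linarith
  · -- 1 + a = p, hence p = 2, a = 1
    have hp2 : p = 2 := by linarith
    have ha1 : a = 1 := by linarith
    subst hp2; subst ha1
    have hone : naH 2 1 1 = 2 := by
      have e := naH_lat' hp ha0 hah 1
      norm_num at e
      exact e
    have h3 : naH 2 1 3 = 4 := by
      have e := naH_lat' hp ha0 hah 2
      norm_num at e
      exact e
    rw [hone, h0, neg_add_cancel, h0] at heval
    norm_num at heval
    rw [h3] at heval
    linarith

/-! ### The exponent sequence and the family of permutations -/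

variable (k l : ℤ → ℤ)

/-- `tseq n` is the translation length of the image of `gₙ`. -/
def tseq (n : ℤ) : ℝ :=
  if 0 ≤ n then ∏ j ∈ Finset.range n.toNat, ((k ((j : ℤ) + 1) : ℝ) / (l ((j : ℤ) + 1) : ℝ))
  else ∏ j ∈ Finset.range (-n).toNat, ((l (-(j : ℤ)) : ℝ) / (k (-(j : ℤ)) : ℝ))

lemma tseq_zero : tseq k l 0 = 1 := by simp [tseq]

lemma tseq_one : tseq k l 1 = (k 1 : ℝ) / (l 1 : ℝ) := by
  rw [tseq, if_pos (by norm_num : (0:ℤ) ≤ 1)]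
  norm_num

lemma tseq_rec (hk : ∀ n : ℤ, 2 ≤ k n) (hl : ∀ n : ℤ, 2 ≤ l n) (n : ℤ) :
    (k n : ℝ) * tseq k l (n - 1) = (l n : ℝ) * tseq k l n := by
  have hkn : (0:ℝ) < (k n : ℝ) := by exact_mod_cast lt_of_lt_of_le (by norm_num) (hk n)
  have hln : (0:ℝ) < (l n : ℝ) := by exact_mod_cast lt_of_lt_of_le (by norm_num) (hl n)
  rcases le_or_gt 1 n with h1 | h1
  · have h0 : (0:ℤ) ≤ n := by omega
    have h0' : (0:ℤ) ≤ n - 1 := by omega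
    have hnt : n.toNat = (n - 1).toNat + 1 := by omega
    have hc : (((n - 1).toNat : ℤ)) = n - 1 := by omega
    rw [tseq, tseq, if_pos h0, if_pos h0', hnt, Finset.prod_range_succ, hc]
    have hsimp : n - 1 + 1 = n := by ring
    rw [hsimp]
    have hln' : (l n : ℝ) ≠ 0 := ne_of_gt hln
    generalize (∏ j ∈ Finset.range (n - 1).toNat,
      ((k ((j : ℤ) + 1) : ℝ) / (l ((j : ℤ) + 1) : ℝ))) = P
    field_simp
  · have h0 : ¬ (0:ℤ) ≤ n - 1 := by omega
    have hnt : (-(n-1)).toNat = (-n).toNat + 1 := by omega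
    have hc : (((-n).toNat : ℤ)) = -n := by omega
    have hTn : tseq k l n
        = ∏ j ∈ Finset.range (-n).toNat, ((l (-(j : ℤ)) : ℝ) / (k (-(j : ℤ)) : ℝ)) := by
      by_cases hn : (0:ℤ) ≤ n
      · have hn0 : n = 0 := by omega
        subst hn0; simp [tseq]
      · rw [tseq, if_neg hn]
    have hTn1 : tseq k l (n - 1)
        = tseq k l n * ((l n : ℝ) / (k n : ℝ)) := by
      rw [tseq, if_neg h0, hnt, Finset.prod_range_succ, hc, neg_neg, hTn]
    rw [hTn1]
    have hkn' : (k n : ℝ) ≠ 0 := ne_of_gt hkn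
    generalize tseq k l n = P
    field_simp

lemma naP_two (hk : ∀ n : ℤ, 2 ≤ k n) : (2:ℝ) ≤ (k 1 : ℝ) := by exact_mod_cast hk 1

lemma naA_pos (hk : ∀ n : ℤ, 2 ≤ k n) (hl : ∀ n : ℤ, 2 ≤ l n) : (0:ℝ) < (k 1 : ℝ) / (l 1 : ℝ) := by
  have h1 : (0:ℝ) < (k 1 : ℝ) := lt_of_lt_of_le (by norm_num) (naP_two k hk)
  have h2 : (0:ℝ) < (l 1 : ℝ) := by exact_mod_cast lt_of_lt_of_le (by norm_num) (hl 1)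
  exact div_pos h1 h2

lemma naA_le (hk : ∀ n : ℤ, 2 ≤ k n) (hl : ∀ n : ℤ, 2 ≤ l n) : (k 1 : ℝ) / (l 1 : ℝ) ≤ (k 1 : ℝ) / 2 := by
  have h1 : (0:ℝ) ≤ (k 1 : ℝ) := le_trans (by norm_num) (naP_two k hk)
  have h2 : (2:ℝ) ≤ (l 1 : ℝ) := by exact_mod_cast hl 1
  gcongr

/-- The conjugating permutation for this `k, l`. -/
def naFhe (hk : ∀ n : ℤ, 2 ≤ k n) (hl : ∀ n : ℤ, 2 ≤ l n) : Equiv.Perm ℝ :=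
  naHe (naP_two k hk) (naA_pos k l hk hl) (naA_le k l hk hl)

/-- The image of the generator `gₙ`. -/
def naF (hk : ∀ n : ℤ, 2 ≤ k n) (hl : ∀ n : ℤ, 2 ≤ l n) (n : ℤ) : Equiv.Perm ℝ :=
  if n ≤ 0 then naT (tseq k l n)
  else naFhe k l hk hl * naT (tseq k l n) * naFhe k l hk hl

lemma naF_rel (hk : ∀ n : ℤ, 2 ≤ k n) (hl : ∀ n : ℤ, 2 ≤ l n) (n : ℤ) : naF k l hk hl (n - 1) ^ (k n) = naF k l hk hl n ^ (l n) := by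
  have hrec := tseq_rec k l hk hl n
  by_cases hn : n ≤ 0
  · rw [naF, naF, if_pos hn, if_pos (show n - 1 ≤ 0 by omega), naT_zpow, naT_zpow, hrec]
  · by_cases h1 : n = 1
    · subst h1
      rw [naF, naF, if_pos (show (1:ℤ) - 1 ≤ 0 by norm_num), if_neg (by norm_num)]
      rw [show (1:ℤ) - 1 = 0 by norm_num, tseq_zero, naT_zpow, mul_one]
      simp only [naFhe]
      nth_rewrite 2 [← naHe_inv (naP_two k hk) (naA_pos k l hk hl) (naA_le k l hk hl)]
      rw [conj_zpow, naT_zpow, tseq_one]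
      have hl1 : (l 1 : ℝ) ≠ 0 := by
        have : (0:ℝ) < (l 1 : ℝ) := by exact_mod_cast lt_of_lt_of_le (by norm_num) (hl 1)
        linarith
      rw [show (l 1 : ℝ) * ((k 1 : ℝ) / (l 1 : ℝ)) = (k 1 : ℝ) by field_simp]
      exact (conj_naT_p _ _ _).symm
    · rw [naF, naF, if_neg (show ¬ (n - 1 ≤ 0) by omega), if_neg hn]
      simp only [naFhe]
      nth_rewrite 2 [← naHe_inv (naP_two k hk) (naA_pos k l hk hl) (naA_le k l hk hl)]
      nth_rewrite 4 [← naHe_inv (naP_two k hk) (naA_pos k l hk hl) (naA_le k l hk hl)]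
      rw [conj_zpow, conj_zpow, naT_zpow, naT_zpow, hrec]

end
end StmtTenAux

theorem stmt10 (k l : ℤ → ℤ) (hk : ∀ n : ℤ, 2 ≤ k n) (hl : ∀ n : ℤ, 2 ≤ l n) :
    ∃ x y : Gtil k l, x * y ≠ y * x := by
  classical
  have hrels : ∀ r ∈ dehornoyRels k l,
      FreeGroup.lift (StmtTenAux.naF k l hk hl) r = 1 := by
    rintro r ⟨n, rfl⟩
    rw [map_mul, map_zpow, map_zpow, FreeGroup.lift_apply_of, FreeGroup.lift_apply_of,
      StmtTenAux.naF_rel k l hk hl n, zpow_neg]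
    exact mul_inv_cancel _
  refine ⟨PresentedGroup.of 0, PresentedGroup.of 1, fun hcomm => ?_⟩
  have h2 := congrArg (PresentedGroup.toGroup hrels) hcomm
  rw [map_mul, map_mul, PresentedGroup.toGroup.of, PresentedGroup.toGroup.of] at h2
  have hf0 : StmtTenAux.naF k l hk hl 0 = StmtTenAux.naT 1 := by
    rw [StmtTenAux.naF, if_pos le_rfl, StmtTenAux.tseq_zero]
  have hf1 : StmtTenAux.naF k l hk hl 1 =
      StmtTenAux.naFhe k l hk hl * StmtTenAux.naT ((k 1 : ℝ) / (l 1 : ℝ)) *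
        StmtTenAux.naFhe k l hk hl := by
    rw [StmtTenAux.naF, if_neg (by norm_num), StmtTenAux.tseq_one]
  rw [hf0, hf1] at h2
  exact StmtTenAux.key_noncomm (StmtTenAux.naP_two k hk) (StmtTenAux.naA_pos k l hk hl)
    (StmtTenAux.naA_le k l hk hl) h2
end

section
/- In the setting of the Dehornoy-type inductive limit (functions k, l : ℤ → ℤ with k(n), l(n) ≥ 2, presented group G̃ with generators gₙ (n ∈ ℤ) and relations g_{n-1}^{k(n)} = g_n^{l(n)}, elements a_{i,m}, and subsemigroup P̃ generated by all a_{i,m}): P̃ has no minimal element, i.e. for every p ∈ P̃ there exists q ∈ P̃ with q⁻¹ · p ∈ P̃. (In order-theoretic terms, the left ordering determined by P̃ is dense.) -/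
lemma aElt_eq (k l : ℤ → ℤ) (i m : ℤ) :
    aElt k l i m = (((List.range (i + m).toNat).map
      (fun t : ℕ => gg k l (-m + (t : ℤ)) ^ (-(k (-m + (t : ℤ) + 1) - 1)))).prod) * gg k l i := by
  unfold aElt
  simp only [bind_pure_comp, List.map_eq_map, List.map_map]
  rfl

lemma aElt_succ (k l : ℤ → ℤ) (i m : ℤ) (h : -m ≤ i) :
    aElt k l i (m+1) = gg k l (-(m+1)) ^ (-(k (-m) - 1)) * aElt k l i m := by
  rw [aElt_eq, aElt_eq]
  have hn : (i + (m+1)).toNat = (i+m).toNat + 1 := by omega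
  rw [hn, List.range_succ_eq_map, List.map_cons, List.prod_cons, List.map_map]
  have hfun : ((fun t : ℕ => gg k l (-(m+1) + (t:ℤ)) ^ (-(k (-(m+1) + (t:ℤ) + 1) - 1))) ∘ Nat.succ)
      = fun t : ℕ => gg k l (-m + (t:ℤ)) ^ (-(k (-m + (t:ℤ) + 1) - 1)) := by
    funext t
    have h1 : -(m+1) + ((t:ℤ)+1) = -m + t := by ring
    simp only [Function.comp, Nat.succ_eq_add_one]
    push_cast
    rw [h1]
  rw [hfun]
  have h3 : -(m+1) + 1 = -m := by ring
  rw [show ((0:ℕ):ℤ) = 0 from rfl, add_zero, h3, mul_assoc]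

lemma aElt_self (k l : ℤ → ℤ) (m : ℤ) : aElt k l (-m) m = gg k l (-m) := by
  rw [aElt_eq]
  norm_num

lemma aElt_split (k l : ℤ → ℤ) (hk : ∀ n : ℤ, 2 ≤ k n) (i m : ℤ) (h : -m ≤ i) :
    aElt k l i m = gg k l (-(m+1)) ^ ((k (-m) - 1).toNat) * aElt k l i (m+1) := by
  rw [aElt_succ k l i m h, ← mul_assoc, ← zpow_natCast (gg k l (-(m+1))),
    Int.toNat_of_nonneg (by have := hk (-m); omega), ← zpow_add]
  norm_num

lemma pow_mem_sub {G : Type*} [Group G] (S : Subsemigroup G) {x : G} (hx : x ∈ S) (n : ℕ) :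
    x ^ (n+1) ∈ S := by
  induction n with
  | zero => simpa using hx
  | succ n ih => rw [pow_succ]; exact S.mul_mem ih hx

theorem stmt12 (k l : ℤ → ℤ) (hk : ∀ n : ℤ, 2 ≤ k n) (hl : ∀ n : ℤ, 2 ≤ l n) :
    ∀ p ∈ Ptil k l, ∃ q ∈ Ptil k l, q⁻¹ * p ∈ Ptil k l := by
  intro p hp
  induction hp using Subsemigroup.closure_induction with
  | mem x hx =>
    obtain ⟨m, i, hm, hmi, him, rfl⟩ := hx
    have hgen1 : aElt k l (-(m+1)) (m+1) ∈ aGenSet k l :=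
      ⟨m+1, -(m+1), by omega, by omega, by omega, rfl⟩
    have hgen2 : aElt k l i (m+1) ∈ aGenSet k l :=
      ⟨m+1, i, by omega, by omega, by omega, rfl⟩
    have hg : gg k l (-(m+1)) ∈ Subsemigroup.closure (aGenSet k l) := by
      have := Subsemigroup.subset_closure hgen1
      rwa [aElt_self] at this
    have hkm := hk (-m)
    have hnat : (k (-m) - 1).toNat = (k (-m) - 2).toNat + 1 := by omega
    refine ⟨gg k l (-(m+1)) ^ ((k (-m) - 1).toNat), ?_, ?_⟩
    · rw [hnat]; exact pow_mem_sub _ hg _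
    · rw [aElt_split k l hk i m hmi, ← mul_assoc, inv_mul_cancel, one_mul]
      exact Subsemigroup.subset_closure hgen2
  | mul x y hx hy ihx ihy =>
    obtain ⟨q, hq, hqx⟩ := ihx
    refine ⟨q, hq, ?_⟩
    rw [show q⁻¹ * (x * y) = (q⁻¹ * x) * y by group]
    exact Subsemigroup.mul_mem _ hqx hy
end

section
/- In the setting of the Dehornoy-type inductive limit (functions k, l : ℤ → ℤ with k(n), l(n) ≥ 2, presented group G̃ with generators gₙ (n ∈ ℤ) and relations g_{n-1}^{k(n)} = g_n^{l(n)}, elements a_{i,m}, and subsemigroup P̃ generated by all a_{i,m}), the following memberships hold: (i) for every n ∈ ℤ, gₙ ∈ P̃ and gₙ⁻¹ · g_{n+1} ∈ P̃; (ii) for every m ≥ 0 and every i with -m ≤ i ≤ m-1, a_{i+1,m}⁻¹ · a_{i,m} ∈ P̃; (iii) for every m ≥ 0 and every i with -m ≤ i ≤ m, a_{i,m+1}⁻¹ · a_{i,m} ∈ P̃. (In the left ordering determined by P̃ these say 1 < gₙ < g_{n+1}, a_{i+1,m} < a_{i,m}, and a_{i,m+1} < a_{i,m}.) -/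
namespace Subsemigroup

variable {G : Type*} [Group G] {S : Subsemigroup G} {x y : G}

theorem pow_succ_mem (hx : x ∈ S) (n : ℕ) : x ^ (n + 1) ∈ S := by
  induction n with
  | zero => simpa using hx
  | succ n ih => rw [pow_succ]; exact S.mul_mem ih hx

theorem zpow_mem_of_pos (hx : x ∈ S) {s : ℤ} (hs : 0 < s) : x ^ s ∈ S := by
  lift s to ℕ using hs.le
  obtain ⟨n, rfl⟩ := Nat.exists_eq_succ_of_ne_zero (by omega : s ≠ 0)
  exact_mod_cast pow_succ_mem hx n

theorem zpow_mul_mem (hx : x ∈ S) {s : ℤ} (hs : 0 ≤ s) (hy : y ∈ S) : x ^ s * y ∈ S := by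
  rcases hs.eq_or_lt with rfl | hs
  · simpa using hy
  · exact S.mul_mem (zpow_mem_of_pos hx hs) hy

end Subsemigroup

namespace Dehornoy

variable {k l : ℤ → ℤ}

theorem gg_sub_one_zpow_eq (n : ℤ) : gg k l (n - 1) ^ k n = gg k l n ^ l n := by
  have h := PresentedGroup.one_of_mem (rels := dehornoyRels k l) ⟨n, rfl⟩
  rw [map_mul, map_zpow, map_zpow, zpow_neg] at h
  exact mul_inv_eq_one.mp h

variable (k l) in
/-- `tail k l j i = g_j^{-(k(j+1)-1)} ⋯ g_{i-1}^{-(k i - 1)} * g_i`. -/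
def tail (j i : ℤ) : Gtil k l :=
  ((List.range (i - j).toNat).map fun t : ℕ => gg k l (j + t) ^ (-(k (j + t + 1) - 1))).prod *
    gg k l i

theorem aElt_eq_tail (i m : ℤ) : aElt k l i m = tail k l (-m) i := by
  simp only [aElt, tail, sub_neg_eq_add, List.pure_def, List.bind_eq_flatMap,
    ← List.map_eq_flatMap, List.map_map]
  rfl

theorem tail_self (i : ℤ) : tail k l i i = gg k l i := by
  simp [tail]

theorem tail_eq_zpow_mul {j i : ℤ} (h : j < i) :
    tail k l j i = gg k l j ^ (-(k (j + 1) - 1)) * tail k l (j + 1) i := by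
  have hlen : (i - j).toNat = (i - (j + 1)).toNat + 1 := by omega
  simp only [tail, hlen, List.range_succ_eq_map, List.map_cons, List.map_map, List.prod_cons,
    Function.comp_def, mul_assoc]
  push_cast
  simp only [add_zero, add_comm (1 : ℤ), add_assoc]

theorem tail_succ_right {j i : ℤ} (h : j ≤ i) :
    tail k l j (i + 1) = tail k l j i * gg k l (i + 1) ^ (1 - l (i + 1)) := by
  have hrel := gg_sub_one_zpow_eq (k := k) (l := l) (i + 1)
  rw [add_sub_cancel_right] at hrel
  have hlen : (i + 1 - j).toNat = (i - j).toNat + 1 := by omega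
  have hcast : (((i - j).toNat : ℕ) : ℤ) = i - j := by omega
  simp only [tail, hlen, List.range_succ, List.map_append, List.prod_append, List.map_singleton,
    List.prod_singleton, hcast, add_sub_cancel, mul_assoc]
  congr 1
  calc gg k l i ^ (-(k (i + 1) - 1)) * gg k l (i + 1)
      = gg k l i * (gg k l i ^ k (i + 1))⁻¹ * gg k l (i + 1) := by
        rw [← zpow_neg, ← zpow_one_add]; congr 2; ring
    _ = gg k l i * gg k l (i + 1) ^ (1 - l (i + 1)) := by
        rw [hrel, mul_assoc, ← zpow_neg, ← zpow_add_one]; congr 2; ring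

theorem tail_succ_left {j i : ℤ} (h : j < i) :
    tail k l (j + 1) i = gg k l j ^ (k (j + 1) - 1) * tail k l j i := by
  rw [tail_eq_zpow_mul h, zpow_neg, mul_inv_cancel_left]

theorem aElt_eq_zpow_mul_aElt_succ {i m : ℤ} (h : -m ≤ i) :
    aElt k l i m = gg k l (-(m + 1)) ^ (k (-m) - 1) * aElt k l i (m + 1) := by
  rw [aElt_eq_tail, aElt_eq_tail, show -m = -(m + 1) + 1 by ring]
  exact tail_succ_left (by omega)

theorem aElt_succ_inv_mul_aElt {i m : ℤ} (h : -m ≤ i) :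
    (aElt k l (i + 1) m)⁻¹ * aElt k l i m = gg k l (i + 1) ^ (l (i + 1) - 1) := by
  rw [aElt_eq_tail, aElt_eq_tail, tail_succ_right h, mul_inv_rev, inv_mul_cancel_right,
    ← zpow_neg, neg_sub]

theorem gg_inv_mul_gg_succ (n : ℤ) :
    (gg k l n)⁻¹ * gg k l (n + 1) = gg k l n ^ (k (n + 1) - 2) * tail k l n (n + 1) := by
  rw [← tail_self (n + 1), tail_succ_left (lt_add_one n), ← mul_assoc, ← zpow_neg_one,
    ← zpow_add]
  congr 2
  ring

theorem aElt_mem_Ptil {i m : ℤ} (h₁ : -m ≤ i) (h₂ : i ≤ m) : aElt k l i m ∈ Ptil k l :=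
  Subsemigroup.subset_closure ⟨m, i, by omega, h₁, h₂, rfl⟩

theorem gg_mem_Ptil_of_nonpos {n : ℤ} (hn : n ≤ 0) : gg k l n ∈ Ptil k l := by
  have h := aElt_mem_Ptil (k := k) (l := l) (i := n) (m := -n) (by omega) (by omega)
  rwa [aElt_eq_tail, neg_neg, tail_self] at h

/-- `tail j i` is `a_{i,m}` multiplied on the left by positive powers of `g_{-m}, …, g_{j-1}`. -/
theorem tail_mem_Ptil_of_forall_lt (hk : ∀ n, 1 ≤ k n) {m i j : ℤ} (h₁ : -m ≤ i) (h₂ : i ≤ m)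
    (hmj : -m ≤ j) (hji : j ≤ i) (hg : ∀ t, -m ≤ t → t < j → gg k l t ∈ Ptil k l) :
    tail k l j i ∈ Ptil k l := by
  induction j, hmj using Int.leInduction with
  | base => rw [← aElt_eq_tail]; exact aElt_mem_Ptil h₁ h₂
  | succ j hmj ih =>
    rw [tail_succ_left (by omega)]
    exact Subsemigroup.zpow_mul_mem (hg j hmj (by omega)) (by linarith [hk (j + 1)])
      (ih (by omega) fun t ht ht' => hg t ht (by omega))

theorem gg_mem_Ptil (hk : ∀ n, 1 ≤ k n) (n : ℤ) : gg k l n ∈ Ptil k l := by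
  suffices h : ∀ N, 0 ≤ N → ∀ n ≤ N, gg k l n ∈ Ptil k l from
    h (max n 0) (le_max_right _ _) n (le_max_left _ _)
  intro N hN
  induction N, hN using Int.leInduction with
  | base => exact fun n hn => gg_mem_Ptil_of_nonpos hn
  | succ N hN ih =>
    intro n hn
    rcases hn.lt_or_eq with hn | rfl
    · exact ih n (by omega)
    · rw [← tail_self]
      exact tail_mem_Ptil_of_forall_lt hk (m := N + 1) (by omega) le_rfl (by omega) le_rfl
        fun t _ ht => ih t (by omega)

theorem tail_mem_Ptil (hk : ∀ n, 1 ≤ k n) {j i : ℤ} (h : j ≤ i) : tail k l j i ∈ Ptil k l :=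
  tail_mem_Ptil_of_forall_lt hk (m := max i (-j)) (by omega) (by omega) (by omega) h
    fun t _ _ => gg_mem_Ptil hk t

/-- `(tail j i)⁻¹ * g_j = g_i^{l i - 1} ⋯ g_{j+1}^{l (j+1) - 1}`. -/
theorem tail_inv_mul_gg_mul_mem_Ptil (hk : ∀ n, 1 ≤ k n) (hl : ∀ n, 1 ≤ l n) {j i : ℤ}
    (h : j ≤ i) {y : Gtil k l} (hy : y ∈ Ptil k l) :
    (tail k l j i)⁻¹ * gg k l j * y ∈ Ptil k l := by
  induction i, h using Int.leInduction with
  | base => simpa [tail_self] using hy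
  | succ i h ih =>
    rw [tail_succ_right h, mul_inv_rev, ← zpow_neg, mul_assoc, mul_assoc,
      ← mul_assoc _ (gg k l j)]
    exact Subsemigroup.zpow_mul_mem (gg_mem_Ptil hk (i + 1)) (by linarith [hl (i + 1)]) ih

theorem tail_inv_mul_zpow_mul_tail_mem_Ptil (hk : ∀ n, 1 ≤ k n) (hl : ∀ n, 1 ≤ l n) {j i s : ℤ}
    (h : j ≤ i) (hs : 0 < s) :
    (tail k l j i)⁻¹ * gg k l j ^ s * tail k l j i ∈ Ptil k l := by
  have hconj := conj_zpow (i := s) (a := (tail k l j i)⁻¹) (b := gg k l j)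
  rw [inv_inv] at hconj
  rw [← hconj]
  exact Subsemigroup.zpow_mem_of_pos
    (tail_inv_mul_gg_mul_mem_Ptil hk hl h (tail_mem_Ptil hk h)) hs

end Dehornoy

open Dehornoy in
theorem stmt13 (k l : ℤ → ℤ) (hk : ∀ n : ℤ, 2 ≤ k n) (hl : ∀ n : ℤ, 2 ≤ l n) :
    -- (i) `1 < gₙ < g_{n+1}`
    (∀ n : ℤ, gg k l n ∈ Ptil k l ∧ (gg k l n)⁻¹ * gg k l (n + 1) ∈ Ptil k l) ∧
    -- (ii) `a_{i+1,m} < a_{i,m}`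
    (∀ m : ℤ, 0 ≤ m → ∀ i : ℤ, -m ≤ i → i ≤ m - 1 →
      (aElt k l (i + 1) m)⁻¹ * aElt k l i m ∈ Ptil k l) ∧
    -- (iii) `a_{i,m+1} < a_{i,m}`
    (∀ m : ℤ, 0 ≤ m → ∀ i : ℤ, -m ≤ i → i ≤ m →
      (aElt k l i (m + 1))⁻¹ * aElt k l i m ∈ Ptil k l) := by
  have hk₁ : ∀ n, 1 ≤ k n := fun n => one_le_two.trans (hk n)
  have hl₁ : ∀ n, 1 ≤ l n := fun n => one_le_two.trans (hl n)
  refine ⟨fun n => ⟨gg_mem_Ptil hk₁ n, ?_⟩, fun m _ i h₁ _ => ?_, fun m _ i h₁ _ => ?_⟩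
  · rw [gg_inv_mul_gg_succ]
    exact Subsemigroup.zpow_mul_mem (gg_mem_Ptil hk₁ n) (by linarith [hk (n + 1)])
      (tail_mem_Ptil hk₁ (by omega))
  · rw [aElt_succ_inv_mul_aElt h₁]
    exact Subsemigroup.zpow_mem_of_pos (gg_mem_Ptil hk₁ (i + 1)) (by linarith [hl (i + 1)])
  · rw [aElt_eq_zpow_mul_aElt_succ h₁, ← mul_assoc, aElt_eq_tail]
    exact tail_inv_mul_zpow_mul_tail_mem_Ptil hk₁ hl₁ (by omega) (by linarith [hk (-m)])
end

section
/- In the setting of the Dehornoy-type inductive limit (functions k, l : ℤ → ℤ with k(n), l(n) ≥ 2, presented group G̃ with generators gₙ (n ∈ ℤ) and relations g_{n-1}^{k(n)} = g_n^{l(n)}, and elements a_{i,m}), the following identities hold in G̃: (i) for every m ≥ 0 and every i with -m ≤ i ≤ m-1, a_{i,m} = a_{i+1,m} · g_{i+1}^{l(i+1)-1}; (ii) for every m ≥ 0 and every i with -m ≤ i ≤ m, a_{i,m} = g_{-m-1}^{k(-m)-1} · a_{i,m+1}. -/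
/-! Both identities peel one factor off the word defining `a_{i,m}`: for (i) the last factor
`g_i^{-(k(i+1)-1)}`, which the relation `g_i^{k(i+1)} = g_{i+1}^{l(i+1)}` turns into
`g_i * g_{i+1}^{-l(i+1)}`; for (ii) the first factor `g_{-m-1}^{-(k(-m)-1)}` of `a_{i,m+1}`. -/

section

variable {k l : ℤ → ℤ}

theorem gg_zpow_k_eq_gg_zpow_l (n : ℤ) : gg k l (n - 1) ^ k n = gg k l n ^ l n := by
  have hrel : (QuotientGroup.mk (FreeGroup.of (n - 1) ^ k n * FreeGroup.of n ^ (-(l n))) :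
      Gtil k l) = 1 :=
    (QuotientGroup.eq_one_iff _).2 (Subgroup.subset_normalClosure ⟨n, rfl⟩)
  rw [QuotientGroup.mk_mul, QuotientGroup.mk_zpow, QuotientGroup.mk_zpow, zpow_neg,
    mul_inv_eq_one] at hrel
  exact hrel

-- The cast `(t : ℤ)` in `aElt` makes Lean coerce the whole list `List.range _` monadically.
theorem aElt_eq_prod_range (i m : ℤ) :
    aElt k l i m = ((List.range (i + m).toNat).map
      fun t : ℕ => gg k l (-m + t) ^ (-(k (-m + t + 1) - 1))).prod * gg k l i := by
  rw [aElt, bind_pure_comp, List.map_eq_map, List.map_map]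
  rfl

theorem aElt_add_one_left {i m : ℤ} (h : -m ≤ i) :
    aElt k l (i + 1) m = aElt k l i m * gg k l i ^ (-k (i + 1)) * gg k l (i + 1) := by
  have hlen : (i + 1 + m).toNat = (i + m).toNat + 1 := by omega
  have hlast : -m + ((i + m).toNat : ℤ) = i := by omega
  rw [aElt_eq_prod_range, aElt_eq_prod_range, hlen, List.range_succ, List.map_append,
    List.prod_append, List.map_singleton, List.prod_singleton, hlast]
  simp only [mul_assoc]
  rw [← mul_assoc (gg k l i), ← zpow_one_add]
  congr 3
  ring

theorem aElt_add_one_right {i m : ℤ} (h : -m ≤ i) :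
    aElt k l i (m + 1) = gg k l (-m - 1) ^ (-(k (-m) - 1)) * aElt k l i m := by
  have hlen : (i + (m + 1)).toNat = (i + m).toNat + 1 := by omega
  have hshift (t : ℕ) : -(m + 1) + ((t + 1 : ℕ) : ℤ) = -m + t := by push_cast; ring
  rw [aElt_eq_prod_range, aElt_eq_prod_range, hlen, List.range_succ_eq_map, List.map_cons,
    List.map_map, List.prod_cons, mul_assoc]
  simp only [Function.comp_def, hshift]
  have hfirst : -(m + 1) + ((0 : ℕ) : ℤ) = -m - 1 := by push_cast; ring
  rw [hfirst, sub_add_cancel]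

theorem aElt_eq_aElt_add_one_mul {i m : ℤ} (h : -m ≤ i) :
    aElt k l i m = aElt k l (i + 1) m * gg k l (i + 1) ^ (l (i + 1) - 1) := by
  rw [aElt_add_one_left h, mul_assoc, ← zpow_one_add, add_sub_cancel,
    ← gg_zpow_k_eq_gg_zpow_l, add_sub_cancel_right, mul_assoc, zpow_neg, inv_mul_cancel, mul_one]

theorem aElt_eq_mul_aElt_add_one {i m : ℤ} (h : -m ≤ i) :
    aElt k l i m = gg k l (-m - 1) ^ (k (-m) - 1) * aElt k l i (m + 1) := by
  rw [aElt_add_one_right h, zpow_neg, mul_inv_cancel_left]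

end

theorem stmt14_general (k l : ℤ → ℤ) :
    -- (i) `a_{i,m} = a_{i+1,m} * g_{i+1}^{l(i+1)-1}`
    (∀ m : ℤ, 0 ≤ m → ∀ i : ℤ, -m ≤ i → i ≤ m - 1 →
      aElt k l i m = aElt k l (i + 1) m * gg k l (i + 1) ^ (l (i + 1) - 1)) ∧
    -- (ii) `a_{i,m} = g_{-m-1}^{k(-m)-1} * a_{i,m+1}`
    (∀ m : ℤ, 0 ≤ m → ∀ i : ℤ, -m ≤ i → i ≤ m →
      aElt k l i m = gg k l (-m - 1) ^ (k (-m) - 1) * aElt k l i (m + 1)) :=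
  ⟨fun _ _ _ hi _ => aElt_eq_aElt_add_one_mul hi, fun _ _ _ hi _ => aElt_eq_mul_aElt_add_one hi⟩

theorem stmt14 (k l : ℤ → ℤ) (hk : ∀ n : ℤ, 2 ≤ k n) (hl : ∀ n : ℤ, 2 ≤ l n) :
    -- (i) `a_{i,m} = a_{i+1,m} * g_{i+1}^{l(i+1)-1}`
    (∀ m : ℤ, 0 ≤ m → ∀ i : ℤ, -m ≤ i → i ≤ m - 1 →
      aElt k l i m = aElt k l (i + 1) m * gg k l (i + 1) ^ (l (i + 1) - 1)) ∧
    -- (ii) `a_{i,m} = g_{-m-1}^{k(-m)-1} * a_{i,m+1}`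
    (∀ m : ℤ, 0 ≤ m → ∀ i : ℤ, -m ≤ i → i ≤ m →
      aElt k l i m = gg k l (-m - 1) ^ (k (-m) - 1) * aElt k l i (m + 1)) :=
  stmt14_general k l
end

section
/- Fix functions k, l : ℤ → ℤ with k(n) ≥ 2 and l(n) ≥ 2 for all n ∈ ℤ, and let G̃ be the presented group with generators gₙ (n ∈ ℤ) and relations g_{n-1}^{k(n)} = g_n^{l(n)} for all n ∈ ℤ. For m ≥ 0 let H_m be the presented group with generators x_{-m}, …, x_m and relations x_{j-1}^{k(j)} = x_j^{l(j)} for -m+1 ≤ j ≤ m. Then the group homomorphism H_m → G̃ determined by x_j ↦ g_j (for -m ≤ j ≤ m) is well-defined and injective, and its image is the subgroup G_(m) of G̃ generated by g_{-m}, …, g_m. -/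
/-- The relators of the finite-stage group `H_m`: for `-m+1 ≤ j ≤ m`,
`x_{j-1}^{k j} * x_j^{-(l j)}`. -/
def finRels (k l : ℤ → ℤ) (m : ℤ) : Set (FreeGroup {j : ℤ // -m ≤ j ∧ j ≤ m}) :=
  {r | ∃ j : ℤ, ∃ hj : -m + 1 ≤ j ∧ j ≤ m,
    r = FreeGroup.of (⟨j - 1, by omega⟩ : {j : ℤ // -m ≤ j ∧ j ≤ m}) ^ k j *
        FreeGroup.of (⟨j, by omega⟩ : {j : ℤ // -m ≤ j ∧ j ≤ m}) ^ (-(l j))}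

/-- The presented group `H_m` with generators `x_{-m}, …, x_m` and relations
`x_{j-1}^{k j} = x_j^{l j}` for `-m+1 ≤ j ≤ m`. -/
abbrev Hfin (k l : ℤ → ℤ) (m : ℤ) : Type := PresentedGroup (finRels k l m)

/-!
Write `H_[a, b]` for the group with generators `x_a, …, x_b` and relations
`x_{j-1}^{k j} = x_j^{l j}`. Adjoining `x_{b+1}` presents `H_[a, b+1]` as the amalgam of `H_[a, b]`
and `ℤ` along `x_b^{k(b+1)} = t^{l(b+1)}`, and similarly on the left. Since `x_b` has infinite order
(the character `x_j ↦ ∏_{a<i≤j} k i * ∏_{j<i≤b} l i` to `ℤ` does not vanish on it), `H_[a, b]`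
embeds in that amalgam, so `H_[a, b] → H_[a', b']` is injective whenever `[a, b] ⊆ [a', b']`.
A word in `x_{-m}, …, x_m` that dies in `G̃` is a product of finitely many conjugates of relators,
so it already dies in some `H_[-N, N]`, hence in `H_[-m, m]`.
-/

universe u

section RootAmalgam

variable (G : Type u) [Group G]

def rootAmalgamFactor : Bool → Type u
  | true => G
  | false => ULift (Multiplicative ℤ)

instance : ∀ b, Group (rootAmalgamFactor G b)
  | true => inferInstanceAs (Group G)
  | false => inferInstanceAs (Group (ULift (Multiplicative ℤ)))

variable {G}

/-- `PushoutI (rootAmalgamLegs v q)` amalgamates `G` and `ℤ` along `1 ↦ v`, `1 ↦ q`; it is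
`⟨G, t | v = t ^ q⟩`. -/
def rootAmalgamLegs (v : G) (q : ℤ) : ∀ b, Multiplicative ℤ →* rootAmalgamFactor G b
  | true => zpowersHom G v
  | false => MulEquiv.ulift.symm.toMonoidHom.comp (zpowersHom _ (.ofAdd q))

theorem rootAmalgamLegs_injective {u : G} (hu : ¬IsOfFinOrder u) {p q : ℤ} (hp : p ≠ 0)
    (hq : q ≠ 0) (b : Bool) : Function.Injective (rootAmalgamLegs (u ^ p) q b) := by
  intro z₁ z₂ h
  apply Multiplicative.toAdd.injective
  cases b
  · have h' := congrArg Multiplicative.toAdd (MulEquiv.ulift.symm.injective h)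
    simp only [zpowersHom_apply, toAdd_zpow, toAdd_ofAdd, smul_eq_mul] at h'
    exact mul_right_cancel₀ hq h'
  · refine mul_left_cancel₀ hp (injective_zpow_iff_not_isOfFinOrder.2 hu ?_)
    change (u ^ p) ^ Multiplicative.toAdd z₁ = (u ^ p) ^ Multiplicative.toAdd z₂ at h
    rwa [← zpow_mul, ← zpow_mul] at h

open Monoid.PushoutI in
theorem rootAmalgam_of_true_eq_zpow (v : G) (q : ℤ) :
    of (φ := rootAmalgamLegs v q) true v =
      of (φ := rootAmalgamLegs v q) false (.up (.ofAdd 1)) ^ q :=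
  have h₁ : rootAmalgamLegs v q true (.ofAdd 1) = v := zpow_one v
  have h₂ : rootAmalgamLegs v q false (.ofAdd 1) = ULift.up (.ofAdd 1) ^ q := by
    change ULift.up ((Multiplicative.ofAdd q) ^ (1 : ℤ)) = ULift.up (.ofAdd 1) ^ q
    ext1
    simp [← ofAdd_zsmul]
  calc of true v = of true (rootAmalgamLegs v q true (.ofAdd 1)) := congrArg _ h₁.symm
    _ = of false (rootAmalgamLegs v q false (.ofAdd 1)) := by
      rw [of_apply_eq_base, of_apply_eq_base]
    _ = _ := by rw [h₂]; exact map_zpow _ _ _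

theorem injective_of_exists_lift_root {E : Type u} [Group E] (i : G →* E)
    {u : G} (hu : ¬IsOfFinOrder u) {p q : ℤ} (hp : p ≠ 0) (hq : q ≠ 0)
    (hlift : ∀ (K : Type u) [Group K] (f : G →* K) (s : K), f u ^ p = s ^ q →
      ∃ φ : E →* K, φ.comp i = f) :
    Function.Injective i := by
  obtain ⟨θ, hθ⟩ := hlift _ (Monoid.PushoutI.of (φ := rootAmalgamLegs (u ^ p) q) true) _
    ((map_zpow _ u p).symm.trans (rootAmalgam_of_true_eq_zpow _ _))
  refine .of_comp (f := θ) ?_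
  rw [← MonoidHom.coe_comp, hθ]
  exact Monoid.PushoutI.of_injective (rootAmalgamLegs_injective hu hp hq) true

end RootAmalgam

theorem gg_zpow_eq (k l : ℤ → ℤ) (n : ℤ) : gg k l (n - 1) ^ k n = gg k l n ^ l n := by
  have hr := PresentedGroup.one_of_mem (rels := dehornoyRels k l) ⟨n, rfl⟩
  rwa [map_mul, map_zpow, map_zpow, zpow_neg, mul_inv_eq_one] at hr

/-- `IntervalGroup k l (-m) m` is definitionally `Hfin k l m`. -/
def intervalRels (k l : ℤ → ℤ) (a b : ℤ) : Set (FreeGroup {j : ℤ // a ≤ j ∧ j ≤ b}) :=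
  {r | ∃ j : ℤ, ∃ hj : a + 1 ≤ j ∧ j ≤ b,
    r = FreeGroup.of (⟨j - 1, by omega⟩ : {j : ℤ // a ≤ j ∧ j ≤ b}) ^ k j *
        FreeGroup.of (⟨j, by omega⟩ : {j : ℤ // a ≤ j ∧ j ≤ b}) ^ (-(l j))}

abbrev IntervalGroup (k l : ℤ → ℤ) (a b : ℤ) : Type := PresentedGroup (intervalRels k l a b)

namespace IntervalGroup

variable {k l : ℤ → ℤ} {a b : ℤ} {K : Type*} [Group K]

/-- The generator `x_j`, with the junk value `1` when `j ∉ [a, b]`. -/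
def gen (k l : ℤ → ℤ) (a b j : ℤ) : IntervalGroup k l a b :=
  if h : a ≤ j ∧ j ≤ b then PresentedGroup.of ⟨j, h⟩ else 1

theorem gen_val (s : {j : ℤ // a ≤ j ∧ j ≤ b}) : gen k l a b s = PresentedGroup.of s :=
  dif_pos s.2

theorem gen_pow_eq {j : ℤ} (h₁ : a + 1 ≤ j) (h₂ : j ≤ b) :
    gen k l a b (j - 1) ^ k j = gen k l a b j ^ l j := by
  have hr := PresentedGroup.one_of_mem (rels := intervalRels k l a b) ⟨j, ⟨h₁, h₂⟩, rfl⟩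
  rw [map_mul, map_zpow, map_zpow, zpow_neg, mul_inv_eq_one] at hr
  rwa [gen, dif_pos (by omega), gen, dif_pos (by omega)]

def lift (f : ℤ → K) (hf : ∀ j, a + 1 ≤ j → j ≤ b → f (j - 1) ^ k j = f j ^ l j) :
    IntervalGroup k l a b →* K :=
  PresentedGroup.toGroup (rels := intervalRels k l a b)
    (f := fun s : {j : ℤ // a ≤ j ∧ j ≤ b} => f s) <| by
    rintro _ ⟨j, ⟨h₁, h₂⟩, rfl⟩
    rw [map_mul, map_zpow, map_zpow, FreeGroup.lift_apply_of, FreeGroup.lift_apply_of,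
      hf j h₁ h₂, zpow_neg, mul_inv_cancel]

section Lift

variable (f : ℤ → K) (hf : ∀ j, a + 1 ≤ j → j ≤ b → f (j - 1) ^ k j = f j ^ l j)

theorem lift_of (s : {j : ℤ // a ≤ j ∧ j ≤ b}) :
    lift f hf (PresentedGroup.of s) = f s :=
  PresentedGroup.toGroup.of _

theorem lift_gen {j : ℤ} (h₁ : a ≤ j) (h₂ : j ≤ b) : lift f hf (gen k l a b j) = f j := by
  rw [gen, dif_pos ⟨h₁, h₂⟩, lift_of]

end Lift

theorem hom_ext {φ ψ : IntervalGroup k l a b →* K}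
    (h : ∀ j, a ≤ j → j ≤ b → φ (gen k l a b j) = ψ (gen k l a b j)) : φ = ψ :=
  PresentedGroup.ext fun s => by simpa only [gen_val] using h s s.2.1 s.2.2

def incl (k l : ℤ → ℤ) {a' b' : ℤ} (ha : a' ≤ a) (hb : b ≤ b') :
    IntervalGroup k l a b →* IntervalGroup k l a' b' :=
  lift (gen k l a' b') fun _ h₁ h₂ => gen_pow_eq (by omega) (by omega)

theorem incl_gen {a' b' j : ℤ} (ha : a' ≤ a) (hb : b ≤ b') (h₁ : a ≤ j) (h₂ : j ≤ b) :
    incl k l ha hb (gen k l a b j) = gen k l a' b' j :=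
  lift_gen _ _ h₁ h₂

theorem incl_comp_incl {a' b' a'' b'' : ℤ} (ha : a' ≤ a) (hb : b ≤ b') (ha' : a'' ≤ a')
    (hb' : b' ≤ b'') :
    (incl k l ha' hb').comp (incl k l ha hb) = incl k l (ha'.trans ha) (hb.trans hb') :=
  hom_ext fun j h₁ h₂ => by
    rw [MonoidHom.comp_apply, incl_gen _ _ h₁ h₂, incl_gen _ _ (by omega) (by omega),
      incl_gen _ _ h₁ h₂]

theorem exists_lift_incl_add_one (f : IntervalGroup k l a b →* K) (s : K)
    (h : f (gen k l a b b) ^ k (b + 1) = s ^ l (b + 1)) :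
    ∃ φ : IntervalGroup k l a (b + 1) →* K,
      φ.comp (incl k l le_rfl (Int.le_add_one le_rfl)) = f := by
  refine ⟨lift (fun j => if j ≤ b then f (gen k l a b j) else s) fun j h₁ h₂ => ?_, ?_⟩
  · rcases le_or_gt j b with hj | hj
    · rw [if_pos (by omega), if_pos hj, ← map_zpow, ← map_zpow, gen_pow_eq h₁ hj]
    · obtain rfl : j = b + 1 := by omega
      rwa [add_sub_cancel_right, if_pos le_rfl, if_neg (by omega)]
  · refine hom_ext fun j h₁ h₂ => ?_
    rw [MonoidHom.comp_apply, incl_gen _ _ h₁ h₂, lift_gen _ _ h₁ (by omega), if_pos h₂]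

theorem exists_lift_incl_sub_one (f : IntervalGroup k l a b →* K) (s : K)
    (h : f (gen k l a b a) ^ l a = s ^ k a) :
    ∃ φ : IntervalGroup k l (a - 1) b →* K, φ.comp (incl k l (by omega) le_rfl) = f := by
  refine ⟨lift (fun j => if a ≤ j then f (gen k l a b j) else s) fun j h₁ h₂ => ?_, ?_⟩
  · rcases le_or_gt a (j - 1) with hj | hj
    · rw [if_pos hj, if_pos (by omega), ← map_zpow, ← map_zpow, gen_pow_eq (by omega) h₂]
    · obtain rfl : j = a := by omega
      rw [if_neg (by omega), if_pos le_rfl]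
      exact h.symm
  · refine hom_ext fun j h₁ h₂ => ?_
    rw [MonoidHom.comp_apply, incl_gen _ _ h₁ h₂, lift_gen _ _ (by omega) h₂, if_pos h₁]

noncomputable def weight (k l : ℤ → ℤ) (a b j : ℤ) : ℤ :=
  (∏ i ∈ Finset.Ioc a j, k i) * ∏ i ∈ Finset.Ioc j b, l i

theorem weight_ne_zero (hk : ∀ n, k n ≠ 0) (hl : ∀ n, l n ≠ 0) (j : ℤ) : weight k l a b j ≠ 0 :=
  mul_ne_zero (Finset.prod_ne_zero_iff.2 fun i _ => hk i)
    (Finset.prod_ne_zero_iff.2 fun i _ => hl i)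

theorem mul_weight_sub_one {j : ℤ} (h₁ : a + 1 ≤ j) (h₂ : j ≤ b) :
    k j * weight k l a b (j - 1) = l j * weight k l a b j := by
  have hIoc₁ : Finset.Ioc a j = insert j (Finset.Ioc a (j - 1)) := by ext; simp; omega
  have hIoc₂ : Finset.Ioc (j - 1) b = insert j (Finset.Ioc j b) := by ext; simp; omega
  rw [weight, weight, hIoc₁, hIoc₂, Finset.prod_insert (by simp), Finset.prod_insert (by simp)]
  ring

noncomputable def weightHom (k l : ℤ → ℤ) (a b : ℤ) :
    IntervalGroup k l a b →* Multiplicative ℤ :=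
  lift (fun j => .ofAdd (weight k l a b j)) fun j h₁ h₂ => by
    rw [← ofAdd_zsmul, ← ofAdd_zsmul, smul_eq_mul, smul_eq_mul, mul_weight_sub_one h₁ h₂]

theorem not_isOfFinOrder_gen (hk : ∀ n, k n ≠ 0) (hl : ∀ n, l n ≠ 0) {j : ℤ} (h₁ : a ≤ j)
    (h₂ : j ≤ b) : ¬IsOfFinOrder (gen k l a b j) := fun h => by
  have h' := (weightHom k l a b).isOfFinOrder h
  rw [weightHom, lift_gen _ _ h₁ h₂, isOfFinOrder_iff_eq_one, ofAdd_eq_one] at h'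
  exact weight_ne_zero hk hl j h'

theorem incl_eq_id : incl k l (le_refl a) (le_refl b) = MonoidHom.id _ :=
  hom_ext fun _ h₁ h₂ => incl_gen _ _ h₁ h₂

theorem incl_injective_of_le_right (hk : ∀ n, k n ≠ 0) (hl : ∀ n, l n ≠ 0) (hab : a ≤ b)
    {b' : ℤ} (hb : b ≤ b') : Function.Injective (incl k l (le_refl a) hb) := by
  induction b', hb using Int.leInduction with
  | base => rw [incl_eq_id]; exact Function.injective_id
  | succ c hbc ih =>
    have hstep : Function.Injective (incl k l (le_refl a) (Int.le_add_one (le_refl c))) :=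
      injective_of_exists_lift_root _ (not_isOfFinOrder_gen hk hl (hab.trans hbc) le_rfl)
        (hk (c + 1)) (hl (c + 1)) fun _ _ => exists_lift_incl_add_one
    rw [← incl_comp_incl le_rfl hbc le_rfl (Int.le_add_one le_rfl)]
    exact hstep.comp ih

theorem incl_injective_of_le_left (hk : ∀ n, k n ≠ 0) (hl : ∀ n, l n ≠ 0) (hab : a ≤ b)
    {a' : ℤ} (ha : a' ≤ a) : Function.Injective (incl k l ha (le_refl b)) := by
  induction a', ha using Int.leInductionDown with
  | base => rw [incl_eq_id]; exact Function.injective_id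
  | pred c hca ih =>
    have hstep : Function.Injective (incl k l (sub_le_self c zero_le_one) (le_refl b)) :=
      injective_of_exists_lift_root _ (not_isOfFinOrder_gen hk hl le_rfl (hca.trans hab))
        (hl c) (hk c) fun _ _ => exists_lift_incl_sub_one
    rw [← incl_comp_incl hca le_rfl (sub_le_self c zero_le_one) le_rfl]
    exact hstep.comp ih

theorem incl_injective (hk : ∀ n, k n ≠ 0) (hl : ∀ n, l n ≠ 0) (hab : a ≤ b) {a' b' : ℤ}
    (ha : a' ≤ a) (hb : b ≤ b') : Function.Injective (incl k l ha hb) := by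
  rw [← incl_comp_incl (le_refl a) hb ha (le_refl b')]
  exact (incl_injective_of_le_left hk hl (hab.trans hb) ha).comp
    (incl_injective_of_le_right hk hl hab hb)

def toGtil (k l : ℤ → ℤ) (a b : ℤ) : IntervalGroup k l a b →* Gtil k l :=
  lift (gg k l) fun n _ _ => gg_zpow_eq k l n

theorem toGtil_of (s : {j : ℤ // a ≤ j ∧ j ≤ b}) :
    toGtil k l a b (PresentedGroup.of s) = gg k l s :=
  lift_of _ _ s

theorem toGtil_comp_mk : (toGtil k l a b).comp (PresentedGroup.mk _) =
    (PresentedGroup.mk _).comp (FreeGroup.map Subtype.val) :=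
  FreeGroup.ext_hom _ _ toGtil_of

theorem range_toGtil :
    (toGtil k l a b).range = Subgroup.closure {x | ∃ j, a ≤ j ∧ j ≤ b ∧ x = gg k l j} := by
  rw [MonoidHom.range_eq_map, ← PresentedGroup.closure_range_of, MonoidHom.map_closure,
    ← Set.range_comp]
  congr 1
  ext x
  simp [toGtil_of, eq_comm, and_assoc]

def truncate (k l : ℤ → ℤ) (a b : ℤ) : FreeGroup ℤ →* IntervalGroup k l a b :=
  FreeGroup.lift (gen k l a b)

theorem truncate_comp_map_val {a' b' : ℤ} (ha : a' ≤ a) (hb : b ≤ b') :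
    (truncate k l a' b').comp (FreeGroup.map Subtype.val) =
      (incl k l ha hb).comp (PresentedGroup.mk _) :=
  FreeGroup.ext_hom _ _ fun s => by
    simp only [MonoidHom.comp_apply, FreeGroup.map.of, truncate, FreeGroup.lift_apply_of]
    exact (incl_gen ha hb s.2.1 s.2.2).symm.trans (congrArg _ (gen_val s))

theorem exists_truncate_eq_one {w : FreeGroup ℤ}
    (hw : w ∈ Subgroup.normalClosure (dehornoyRels k l)) :
    ∃ N, ∀ a b, a ≤ -N → N ≤ b → truncate k l a b w = 1 := by
  induction hw using Subgroup.closure_induction with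
  | mem x hx =>
    obtain ⟨_, ⟨n, rfl⟩, hconj⟩ := Group.mem_conjugatesOfSet_iff.1 hx
    obtain ⟨c, rfl⟩ := isConj_iff.1 hconj
    refine ⟨max n (1 - n), fun a b ha hb => ?_⟩
    have hr : truncate k l a b (.of (n - 1) ^ k n * .of n ^ (-(l n))) = 1 := by
      simp only [truncate, map_mul, map_zpow, FreeGroup.lift_apply_of]
      rw [gen_pow_eq (by omega) (by omega), zpow_neg, mul_inv_cancel]
    rw [map_mul, map_mul, map_inv, hr, mul_one, mul_inv_cancel]
  | one => exact ⟨0, fun _ _ _ _ => map_one _⟩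
  | mul x y _ _ hx hy =>
    obtain ⟨N₁, hN₁⟩ := hx
    obtain ⟨N₂, hN₂⟩ := hy
    refine ⟨max N₁ N₂, fun a b ha hb => ?_⟩
    rw [map_mul, hN₁ a b (by omega) (by omega), hN₂ a b (by omega) (by omega), mul_one]
  | inv x _ hx =>
    obtain ⟨N, hN⟩ := hx
    exact ⟨N, fun a b ha hb => by rw [map_inv, hN a b ha hb, inv_one]⟩

theorem toGtil_injective (hk : ∀ n, k n ≠ 0) (hl : ∀ n, l n ≠ 0) (hab : a ≤ b) :
    Function.Injective (toGtil k l a b) := by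
  refine (injective_iff_map_eq_one _).2 fun x hx => ?_
  obtain ⟨w, rfl⟩ := PresentedGroup.mk_surjective _ x
  have hw : FreeGroup.map Subtype.val w ∈ Subgroup.normalClosure (dehornoyRels k l) := by
    rw [← PresentedGroup.mk_eq_one_iff, ← MonoidHom.comp_apply, ← toGtil_comp_mk]
    exact hx
  obtain ⟨N, hN⟩ := exists_truncate_eq_one hw
  have ha : min a (-N) ≤ a := min_le_left _ _
  have hb : b ≤ max b N := le_max_left _ _
  refine (injective_iff_map_eq_one (incl k l ha hb)).1 (incl_injective hk hl hab ha hb) _ ?_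
  rw [← MonoidHom.comp_apply, ← truncate_comp_map_val ha hb]
  exact hN _ _ (min_le_right _ _) (le_max_right _ _)

end IntervalGroup

theorem stmt15 (k l : ℤ → ℤ) (hk : ∀ n : ℤ, 2 ≤ k n) (hl : ∀ n : ℤ, 2 ≤ l n)
    (m : ℤ) (hm : 0 ≤ m) :
    ∃ ψ : Hfin k l m →* Gtil k l,
      (∀ j : {j : ℤ // -m ≤ j ∧ j ≤ m}, ψ (PresentedGroup.of j) = gg k l j.val) ∧
      (∀ ψ' : Hfin k l m →* Gtil k l,
        (∀ j : {j : ℤ // -m ≤ j ∧ j ≤ m}, ψ' (PresentedGroup.of j) = gg k l j.val) →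
        ψ' = ψ) ∧
      Function.Injective ψ ∧
      ψ.range = Gsub k l m := by
  refine ⟨IntervalGroup.toGtil k l (-m) m, IntervalGroup.toGtil_of,
    fun ψ' h => PresentedGroup.ext fun j => (h j).trans (IntervalGroup.toGtil_of j).symm,
    IntervalGroup.toGtil_injective (fun n => by linarith [hk n]) (fun n => by linarith [hl n])
      (by omega), IntervalGroup.range_toGtil⟩
end

section
/- Let l be a positive integer and let G be the presented group with generators gₙ (n ∈ ℤ) and relations gₙ = g_{n+1}^l for all n ∈ ℤ. Then G is isomorphic to the additive subgroup ℤ[1/l] = {x ∈ ℚ : ∃ a ∈ ℤ, ∃ n ∈ ℕ, x = a / lⁿ} of the rationals (viewed as a group, i.e. to Multiplicative of this additive subgroup), an isomorphism being determined by gₙ ↦ 1/lⁿ. Moreover, if l ≥ 2 then G has exactly two positive cones. -/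
/-- The relators `gₙ * g_{n+1}^{-l}` of the presented group. -/
def zRels (l : ℕ) : Set (FreeGroup ℤ) :=
  {r | ∃ n : ℤ, r = FreeGroup.of n * FreeGroup.of (n + 1) ^ (-(l : ℤ))}

/-- The presented group with generators `gₙ (n : ℤ)` and relations `gₙ = g_{n+1}^l`. -/
abbrev Gz (l : ℕ) : Type := PresentedGroup (zRels l)

/-- The image `gₙ` in the presented group of the `n`-th generator. -/
def gz (l : ℕ) (n : ℤ) : Gz l := PresentedGroup.of n

/-- The additive subgroup `ℤ[1/l] = {a / lⁿ : a ∈ ℤ, n ∈ ℕ}` of `ℚ`. -/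
def zInvl (l : ℕ) (hl : 0 < l) : AddSubgroup ℚ where
  carrier := {x : ℚ | ∃ (a : ℤ) (n : ℕ), x = (a : ℚ) / (l : ℚ) ^ n}
  zero_mem' := ⟨0, 0, by norm_num⟩
  add_mem' := by
    rintro x y ⟨a, n, rfl⟩ ⟨b, p, rfl⟩
    refine ⟨a * (l : ℤ) ^ p + b * (l : ℤ) ^ n, n + p, ?_⟩
    have hl' : ((l : ℚ)) ≠ 0 := by positivity
    rw [div_add_div _ _ (pow_ne_zero n hl') (pow_ne_zero p hl'), pow_add]
    push_cast
    ring
  neg_mem' := by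
    rintro x ⟨a, n, rfl⟩
    exact ⟨-a, n, by push_cast; ring⟩

/-!
Sending `gₙ` to `l⁻ⁿ` respects the relations, so it defines a homomorphism onto `ℤ[1/l]`
(`a / lⁿ` is the image of `gₙ ^ a`). Since `gₘ = gₙ ^ l ^ (n - m)` for `m ≤ n`, every element of
the presented group is a single power `gₙ ^ a`, whose image `a · l⁻ⁿ` vanishes only for `a = 0`;
so the homomorphism is injective.

For a group `G` embedded in `ℚ`, any two elements `g, h` whose images have the same sign have a
common power `g ^ p = h ^ q` with `p, q > 0`, and a positive cone containing `g` then contains `h`.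
Hence the only positive cones are the preimages of the positive and of the negative rationals.
-/

namespace IsPositiveCone

variable {G : Type*} [Group G] {P : Set G}

theorem ne_one (hP : IsPositiveCone P) {g : G} (hg : g ∈ P) : g ≠ 1 := by
  rintro rfl
  exact hP.2.2.2 hg

theorem pow_mem (hP : IsPositiveCone P) {g : G} (hg : g ∈ P) {p : ℕ} (hp : 0 < p) :
    g ^ p ∈ P :=
  Nat.le_induction (by simpa using hg) (fun n _ ih => pow_succ g n ▸ hP.1 _ ih _ hg) p hp

theorem inv (hP : IsPositiveCone P) : IsPositiveCone P⁻¹ := by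
  refine ⟨fun a ha b hb => ?_, fun g => ?_, fun g hg => hP.2.2.1 _ hg, ?_⟩
  · simpa only [Set.mem_inv, mul_inv_rev] using hP.1 _ hb _ ha
  · simpa only [Set.mem_inv, inv_inv, or_comm, or_left_comm] using hP.2.1 g
  · simpa using hP.2.2.2

theorem ne_inv [Nontrivial G] (hP : IsPositiveCone P) : P ≠ P⁻¹ := by
  obtain ⟨g, hg⟩ := exists_ne (1 : G)
  intro h
  have hsymm (x : G) : x ∈ P ↔ x⁻¹ ∈ P := by
    conv_lhs => rw [h]
    exact Set.mem_inv
  rcases hP.2.1 g with hg' | hg' | rfl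
  · exact hP.2.2.1 g hg' ((hsymm g).1 hg')
  · exact hP.2.2.1 g ((hsymm g).2 hg') hg'
  · exact hg rfl

theorem mem_of_pow_eq_pow (hP : IsPositiveCone P) {g h : G} (hg : g ∈ P) {p q : ℕ}
    (hp : 0 < p) (hq : 0 < q) (hgh : g ^ p = h ^ q) : h ∈ P := by
  have hgp := hP.pow_mem hg hp
  rcases hP.2.1 h with hh | hh | rfl
  · exact hh
  · exact absurd (inv_pow h q ▸ hP.pow_mem hh hq) (hP.2.2.1 _ (hgh ▸ hgp))
  · exact absurd (hgh ▸ hgp) (by simpa using hP.2.2.2)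

end IsPositiveCone

theorem Rat.exists_nat_mul_eq_of_mul_pos {x y : ℚ} (hxy : 0 < x * y) :
    ∃ p q : ℕ, 0 < p ∧ 0 < q ∧ p * x = q * y := by
  have hx : x ≠ 0 := by rintro rfl; simp at hxy
  set r := y / x with hr_def
  have hr : 0 < r := by
    rw [show r = x * y / (x * x) by rw [hr_def]; field_simp]
    exact div_pos hxy (mul_self_pos.2 hx)
  have hnum : ((r.num.toNat : ℤ) : ℚ) = r.num := by
    rw [Int.toNat_of_nonneg (Rat.num_pos.2 hr).le]
  refine ⟨r.num.toNat, r.den, by simpa using Rat.num_pos.2 hr, r.pos, ?_⟩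
  rw [← Int.cast_natCast, hnum, ← Rat.mul_den_eq_num, hr_def]
  field_simp

section SubgroupOfRat

open Multiplicative

variable {G : Type*} [Group G] {f : G →* Multiplicative ℚ}

theorem isPositiveCone_setOf_pos (hf : Function.Injective f) :
    IsPositiveCone {g | 0 < toAdd (f g)} := by
  refine ⟨fun a ha b hb => ?_, fun g => ?_, fun g hg hg' => ?_, by simp⟩
  · simpa only [Set.mem_ofPred_eq, map_mul, toAdd_mul] using add_pos ha hb
  · simp only [Set.mem_ofPred_eq, map_inv, toAdd_inv, neg_pos]
    rcases lt_trichotomy (toAdd (f g)) 0 with h | h | h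
    · exact .inr (.inl h)
    · exact .inr (.inr ((map_eq_one_iff f hf).1 (toAdd_eq_zero.1 h)))
    · exact .inl h
  · simp only [Set.mem_ofPred_eq, map_inv, toAdd_inv, neg_pos] at hg hg'
    exact hg.not_gt hg'

namespace IsPositiveCone

variable {P : Set G}

theorem toAdd_ne_zero (hP : IsPositiveCone P) (hf : Function.Injective f) {g : G}
    (hg : g ∈ P) : toAdd (f g) ≠ 0 :=
  fun h0 => hP.ne_one hg ((map_eq_one_iff f hf).1 (toAdd_eq_zero.1 h0))

theorem mem_of_mul_pos (hP : IsPositiveCone P) (hf : Function.Injective f) {g h : G}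
    (hg : g ∈ P) (hgh : 0 < toAdd (f g) * toAdd (f h)) : h ∈ P := by
  obtain ⟨p, q, hp, hq, hpq⟩ := Rat.exists_nat_mul_eq_of_mul_pos hgh
  refine hP.mem_of_pow_eq_pow hg hp hq (hf (toAdd.injective ?_))
  simpa only [map_pow, toAdd_pow, nsmul_eq_mul] using hpq

theorem eq_setOf_mul_pos (hP : IsPositiveCone P) (hf : Function.Injective f) {g : G}
    (hg : g ∈ P) : P = {h | 0 < toAdd (f g) * toAdd (f h)} := by
  refine Set.Subset.antisymm (fun h hh => ?_) (fun h hgh => hP.mem_of_mul_pos hf hg hgh)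
  by_contra hle
  have hinv : 0 < toAdd (f g) * toAdd (f h⁻¹) := by
    simp only [map_inv, toAdd_inv, mul_neg, neg_pos]
    exact lt_of_le_of_ne (not_lt.1 hle)
      (mul_ne_zero (hP.toAdd_ne_zero hf hg) (hP.toAdd_ne_zero hf hh))
  exact hP.2.2.1 h hh (hP.mem_of_mul_pos hf hg hinv)

theorem eq_or_eq_inv_of_injective [Nontrivial G] (hP : IsPositiveCone P)
    (hf : Function.Injective f) :
    P = {g | 0 < toAdd (f g)} ∨ P = {g | 0 < toAdd (f g)}⁻¹ := by
  obtain ⟨g, hg⟩ : P.Nonempty := by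
    obtain ⟨g, hg1⟩ := exists_ne (1 : G)
    rcases hP.2.1 g with hg | hg | rfl
    exacts [⟨_, hg⟩, ⟨_, hg⟩, absurd rfl hg1]
  rw [hP.eq_setOf_mul_pos hf hg]
  rcases (hP.toAdd_ne_zero hf hg).lt_or_gt with hneg | hpos
  · refine .inr (Set.ext fun h => ?_)
    simp only [Set.mem_ofPred_eq, Set.mem_inv, map_inv, toAdd_inv, ← neg_mul_neg (toAdd (f g))]
    exact mul_pos_iff_of_pos_left (neg_pos.2 hneg)
  · exact .inl (Set.ext fun h => mul_pos_iff_of_pos_left hpos)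

end IsPositiveCone

theorem exists_two_isPositiveCone_of_injective [Nontrivial G] (hf : Function.Injective f) :
    ∃ P₁ P₂ : Set G, P₁ ≠ P₂ ∧ IsPositiveCone P₁ ∧ IsPositiveCone P₂ ∧
      ∀ Q : Set G, IsPositiveCone Q → Q = P₁ ∨ Q = P₂ :=
  have hpos := isPositiveCone_setOf_pos hf
  ⟨_, _, hpos.ne_inv, hpos, hpos.inv, fun _ hQ => hQ.eq_or_eq_inv_of_injective hf⟩

end SubgroupOfRat

section Presentation

variable {l : ℕ}

theorem gz_eq_pow (n : ℤ) : gz l n = gz l (n + 1) ^ l := by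
  have h := PresentedGroup.one_of_mem (rels := zRels l) ⟨n, rfl⟩
  rw [map_mul, map_zpow, zpow_neg, zpow_natCast] at h
  exact eq_of_mul_inv_eq_one h

theorem gz_eq_pow_pow (n : ℤ) (k : ℕ) : gz l n = gz l (n + k) ^ (l ^ k) := by
  induction k with
  | zero => simp
  | succ k ih => rw [ih, gz_eq_pow, ← pow_mul, pow_succ', Nat.cast_succ, add_assoc]

theorem monotone_zpowers_gz : Monotone fun n => Subgroup.zpowers (gz l n) := by
  intro m n hmn
  obtain ⟨k, rfl⟩ := Int.le.dest hmn
  rw [Subgroup.zpowers_le, gz_eq_pow_pow m k]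
  exact Subgroup.pow_mem _ (Subgroup.mem_zpowers _) _

theorem exists_gz_zpow_eq (x : Gz l) : ∃ n a : ℤ, gz l n ^ a = x := by
  have hx : x ∈ ⨆ n, Subgroup.zpowers (gz l n) :=
    PresentedGroup.generated_by _ _ (fun n => Subgroup.mem_iSup_of_mem n (Subgroup.mem_zpowers _)) x
  obtain ⟨n, hn⟩ := (Subgroup.mem_iSup_of_directed monotone_zpowers_gz.directed_le).1 hx
  exact ⟨n, Subgroup.mem_zpowers_iff.1 hn⟩

end Presentation

section ZInvl

open Multiplicative

variable {l : ℕ} (hl : 0 < l)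

theorem zpow_mem_zInvl (n : ℤ) : (l : ℚ) ^ n ∈ zInvl l hl := by
  obtain ⟨k, rfl | rfl⟩ := Int.eq_nat_or_neg n
  · exact ⟨l ^ k, 0, by simp⟩
  · exact ⟨1, k, by simp⟩

def gzImage (n : ℤ) : Multiplicative (zInvl l hl) :=
  ofAdd ⟨(l : ℚ) ^ (-n), zpow_mem_zInvl hl _⟩

def toZInvl : Gz l →* Multiplicative (zInvl l hl) :=
  PresentedGroup.toGroup (f := gzImage hl) <| by
    rintro _ ⟨n, rfl⟩
    apply toAdd.injective
    apply Subtype.ext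
    simp only [map_mul, map_zpow, FreeGroup.lift_apply_of, toAdd_mul, toAdd_zpow, gzImage,
      toAdd_ofAdd, toAdd_one, AddSubgroup.coe_add, AddSubgroup.coe_zsmul, AddSubgroup.coe_zero,
      zsmul_eq_mul]
    have hl' : (l : ℚ) ≠ 0 := by exact_mod_cast hl.ne'
    rw [show -n = -(n + 1) + 1 by ring, zpow_add_one₀ hl']
    push_cast
    ring

theorem coe_toAdd_toZInvl_gz_zpow (n a : ℤ) :
    ((toAdd (toZInvl hl (gz l n ^ a)) : zInvl l hl) : ℚ) = a * (l : ℚ) ^ (-n) := by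
  simp [toZInvl, gz, gzImage, toAdd_zpow, zsmul_eq_mul]

theorem toZInvl_bijective : Function.Bijective (toZInvl hl) := by
  have hl' : (l : ℚ) ≠ 0 := by exact_mod_cast hl.ne'
  refine ⟨(injective_iff_map_eq_one _).2 fun x hx => ?_, fun y => ?_⟩
  · obtain ⟨n, a, rfl⟩ := exists_gz_zpow_eq x
    have h := congrArg (fun y => ((toAdd y : zInvl l hl) : ℚ)) hx
    simp only [coe_toAdd_toZInvl_gz_zpow, toAdd_one, AddSubgroup.coe_zero, mul_eq_zero,
      Int.cast_eq_zero, zpow_ne_zero _ hl', or_false] at h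
    rw [h, zpow_zero]
  · obtain ⟨a, k, hy⟩ := (toAdd y).2
    refine ⟨gz l k ^ a, toAdd.injective (Subtype.ext ?_)⟩
    rw [coe_toAdd_toZInvl_gz_zpow, hy, zpow_neg, zpow_natCast, div_eq_mul_inv]

noncomputable def equivZInvl : Gz l ≃* Multiplicative (zInvl l hl) :=
  MulEquiv.ofBijective _ (toZInvl_bijective hl)

theorem coe_toAdd_equivZInvl_gz (n : ℤ) :
    ((toAdd (equivZInvl hl (gz l n)) : zInvl l hl) : ℚ) = 1 / (l : ℚ) ^ n := by
  simpa [equivZInvl, zpow_neg] using coe_toAdd_toZInvl_gz_zpow hl n 1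

end ZInvl

theorem gz_ne_one {l : ℕ} (hl : 0 < l) (n : ℤ) : gz l n ≠ 1 := fun h =>
  zpow_ne_zero n (Nat.cast_ne_zero.2 hl.ne')
    (by simpa [h] using (coe_toAdd_toZInvl_gz_zpow hl n 1).symm)

theorem stmt16 (l : ℕ) (hl : 0 < l) :
    -- `Gz l` is isomorphic to `Multiplicative ℤ[1/l]`, via `gₙ ↦ 1 / lⁿ`
    (∃ e : Gz l ≃* Multiplicative (zInvl l hl),
      ∀ n : ℤ, ((Multiplicative.toAdd (e (gz l n)) : zInvl l hl) : ℚ) =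
        1 / (l : ℚ) ^ n) ∧
    -- if `l ≥ 2` then `Gz l` has exactly two positive cones
    (2 ≤ l → ∃ P₁ P₂ : Set (Gz l), P₁ ≠ P₂ ∧
      IsPositiveCone P₁ ∧ IsPositiveCone P₂ ∧
      ∀ Q : Set (Gz l), IsPositiveCone Q → Q = P₁ ∨ Q = P₂) := by
  refine ⟨⟨equivZInvl hl, coe_toAdd_equivZInvl_gz hl⟩, fun _ => ?_⟩
  have : Nontrivial (Gz l) := nontrivial_of_ne _ _ (gz_ne_one hl 0)
  exact exists_two_isPositiveCone_of_injective
    (f := (zInvl l hl).subtype.toMultiplicative.comp (equivZInvl hl).toMonoidHom)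
    (Subtype.val_injective.comp (equivZInvl hl).injective)
end

section
/- Let k, l ≥ 2 be integers, let G̃ be the presented group with generators gₙ (n ∈ ℤ) and relations gₙ^k = g_{n+1}^l for all n ∈ ℤ, and let H be the presented group with two generators g, t and the single relation t⁻¹·g^k·t = g^l (a Baumslag–Solitar-type group). Then the assignment gₙ ↦ tⁿ · g · t⁻ⁿ determines a well-defined injective group homomorphism ι : G̃ → H, and the range of ι equals the kernel of the homomorphism H → ℤ determined by g ↦ 0 and t ↦ 1. -/
/-- The relators `gₙ^k * g_{n+1}^{-l}` of the inductive limit `G̃`. -/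
def limRels (k l : ℤ) : Set (FreeGroup ℤ) :=
  {r | ∃ n : ℤ, r = FreeGroup.of n ^ k * FreeGroup.of (n + 1) ^ (-l)}

/-- The presented group `G̃` with generators `gₙ (n : ℤ)` and relations `gₙ^k = g_{n+1}^l`. -/
abbrev GlimBS (k l : ℤ) : Type := PresentedGroup (limRels k l)

/-- The image `gₙ` in `G̃` of the `n`-th generator. -/
def glim (k l : ℤ) (n : ℤ) : GlimBS k l := PresentedGroup.of n

/-- The single relator `t⁻¹ * g^k * t * g^{-l}` of the Baumslag–Solitar-type group `H`;
`false` corresponds to the generator `g` and `true` to the generator `t`. -/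
def bsRels (k l : ℤ) : Set (FreeGroup Bool) :=
  {(FreeGroup.of true)⁻¹ * FreeGroup.of false ^ k * FreeGroup.of true *
    FreeGroup.of false ^ (-l)}

/-- The Baumslag–Solitar-type group `H = ⟨g, t ∣ t⁻¹ g^k t = g^l⟩`. -/
abbrev BSgrp (k l : ℤ) : Type := PresentedGroup (bsRels k l)

/-- The generator `g` of `H`. -/
def bsG (k l : ℤ) : BSgrp k l := PresentedGroup.of false

/-- The generator `t` of `H`. -/
def bsT (k l : ℤ) : BSgrp k l := PresentedGroup.of true

/-- The homomorphism `H → ℤ` determined by `g ↦ 0` and `t ↦ 1`. -/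
def bsDeg (k l : ℤ) : BSgrp k l →* Multiplicative ℤ :=
  PresentedGroup.toGroup
    (f := fun b : Bool => if b then Multiplicative.ofAdd (1 : ℤ) else 1)
    (by
      rintro r ⟨rfl⟩
      simp)

namespace Stmt17Aux

variable (k l : ℤ)

lemma glim_rel (n : ℤ) : glim k l n ^ k * glim k l (n + 1) ^ (-l) = 1 := by
  have : glim k l n ^ k * glim k l (n + 1) ^ (-l)
      = PresentedGroup.mk (limRels k l) (FreeGroup.of n ^ k * FreeGroup.of (n + 1) ^ (-l)) := by
    simp [glim, PresentedGroup.of, map_mul, map_zpow]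
  rw [this]
  exact (QuotientGroup.eq_one_iff _).mpr
    (Subgroup.subset_normalClosure ⟨n, rfl⟩)

/-- Shift by `d` on `G̃`. -/
def shiftHom (d : ℤ) : GlimBS k l →* GlimBS k l :=
  PresentedGroup.toGroup (f := fun n => glim k l (n + d)) (by
    rintro r ⟨n, rfl⟩
    simp only [map_mul, map_zpow, FreeGroup.lift_apply_of]
    have h : n + 1 + d = (n + d) + 1 := by ring
    rw [h]
    exact glim_rel k l (n + d))

@[simp] lemma shiftHom_glim (d n : ℤ) : shiftHom k l d (glim k l n) = glim k l (n + d) :=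
  PresentedGroup.toGroup.of _

lemma shiftHom_comp (d e : ℤ) :
    (shiftHom k l d).comp (shiftHom k l e) = shiftHom k l (e + d) := by
  ext n
  show shiftHom k l d (shiftHom k l e (glim k l n)) = shiftHom k l (e + d) (glim k l n)
  simp [add_assoc]

lemma shiftHom_zero : shiftHom k l 0 = MonoidHom.id _ := by
  ext n
  show shiftHom k l 0 (glim k l n) = glim k l n
  simp

/-- Shift by `d` as an automorphism. -/
def shiftAut (d : ℤ) : MulAut (GlimBS k l) :=
  MonoidHom.toMulEquiv (shiftHom k l d) (shiftHom k l (-d))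
    (by rw [shiftHom_comp]; simp [shiftHom_zero])
    (by rw [shiftHom_comp]; simp [shiftHom_zero])

@[simp] lemma shiftAut_apply (d : ℤ) (x : GlimBS k l) :
    shiftAut k l d x = shiftHom k l d x := rfl

/-- The shift action of `ℤ` on `G̃`. -/
def shiftφ : Multiplicative ℤ →* MulAut (GlimBS k l) where
  toFun m := shiftAut k l (Multiplicative.toAdd m)
  map_one' := by
    ext x
    show shiftHom k l 0 x = x
    rw [shiftHom_zero]; rfl
  map_mul' m m' := by
    ext x
    show shiftHom k l (Multiplicative.toAdd m + Multiplicative.toAdd m') x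
      = shiftHom k l (Multiplicative.toAdd m) (shiftHom k l (Multiplicative.toAdd m') x)
    rw [add_comm, ← shiftHom_comp]; rfl

/-- `G̃ ⋊ ℤ`. -/
abbrev SDP : Type := SemidirectProduct (GlimBS k l) (Multiplicative ℤ) (shiftφ k l)

/-- The embedding `ι : G̃ → H`, `gₙ ↦ tⁿ g t⁻ⁿ`. -/
def iota : GlimBS k l →* BSgrp k l :=
  PresentedGroup.toGroup
    (f := fun n => bsT k l ^ n * bsG k l * bsT k l ^ (-n)) (by
      have hrel : (bsT k l)⁻¹ * bsG k l ^ k * bsT k l * bsG k l ^ (-l) = 1 := by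
        have : (bsT k l)⁻¹ * bsG k l ^ k * bsT k l * bsG k l ^ (-l)
            = PresentedGroup.mk (bsRels k l)
              ((FreeGroup.of true)⁻¹ * FreeGroup.of false ^ k * FreeGroup.of true *
                FreeGroup.of false ^ (-l)) := by
          simp [bsG, bsT, PresentedGroup.of, map_mul, map_zpow]
        rw [this]
        exact (QuotientGroup.eq_one_iff _).mpr (Subgroup.subset_normalClosure rfl)
      have key : bsG k l ^ k = bsT k l * bsG k l ^ l * (bsT k l)⁻¹ := by
        have := hrel
        rw [mul_eq_one_iff_eq_inv] at this
        have h2 : (bsT k l)⁻¹ * bsG k l ^ k * bsT k l = bsG k l ^ l := by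
          rw [this]; group
        calc bsG k l ^ k
            = bsT k l * ((bsT k l)⁻¹ * bsG k l ^ k * bsT k l) * (bsT k l)⁻¹ := by group
          _ = bsT k l * bsG k l ^ l * (bsT k l)⁻¹ := by rw [h2]
      have conjz : ∀ (a b : BSgrp k l) (m : ℤ), (a * b * a⁻¹) ^ m = a * b ^ m * a⁻¹ := by
        intro a b m
        simpa [MulAut.conj_apply] using (map_zpow (MulAut.conj a) b m).symm
      rintro r ⟨n, rfl⟩
      simp only [map_mul, map_zpow, FreeGroup.lift_apply_of]
      rw [zpow_neg (bsT k l) n, zpow_neg (bsT k l) (n + 1), conjz, conjz, key,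
        zpow_add_one]
      group)

@[simp] lemma iota_glim (n : ℤ) :
    iota k l (glim k l n) = bsT k l ^ n * bsG k l * bsT k l ^ (-n) :=
  PresentedGroup.toGroup.of _

@[simp] lemma shiftφ_apply (m : Multiplicative ℤ) (x : GlimBS k l) :
    shiftφ k l m x = shiftHom k l (Multiplicative.toAdd m) x := rfl

/-- `ℤ → H`, `n ↦ tⁿ`. -/
def tau : Multiplicative ℤ →* BSgrp k l := zpowersHom _ (bsT k l)

@[simp] lemma tau_apply (m : Multiplicative ℤ) :
    tau k l m = bsT k l ^ (Multiplicative.toAdd m) := rfl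

lemma psi_comm (m : Multiplicative ℤ) :
    (iota k l).comp ((shiftφ k l) m).toMonoidHom
      = (MulAut.conj (tau k l m)).toMonoidHom.comp (iota k l) := by
  ext n
  show iota k l (shiftφ k l m (glim k l n))
    = MulAut.conj (tau k l m) (iota k l (glim k l n))
  rw [shiftφ_apply, shiftHom_glim, iota_glim, MulAut.conj_apply, iota_glim, tau_apply]
  group

/-- The map `G̃ ⋊ ℤ → H`. -/
def psi : SDP k l →* BSgrp k l :=
  SemidirectProduct.lift (iota k l) (tau k l) (psi_comm k l)

@[simp] lemma psi_inl (x : GlimBS k l) :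
    psi k l (SemidirectProduct.inl x) = iota k l x := SemidirectProduct.lift_inl _ _ _ _

@[simp] lemma psi_inr (m : Multiplicative ℤ) :
    psi k l (SemidirectProduct.inr m) = tau k l m := SemidirectProduct.lift_inr _ _ _ _

/-- The map `H → G̃ ⋊ ℤ`. -/
def phi : BSgrp k l →* SDP k l :=
  PresentedGroup.toGroup
    (f := fun b : Bool => if b then SemidirectProduct.inr (Multiplicative.ofAdd (1 : ℤ))
      else SemidirectProduct.inl (glim k l 0)) (by
    rintro r ⟨rfl⟩
    simp only [map_mul, map_zpow, map_inv, FreeGroup.lift_apply_of]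
    rw [if_pos (trivial : True), if_neg (show ¬(false = true) by decide)]
    simp only [← map_zpow SemidirectProduct.inl]
    have h1 : (SemidirectProduct.inr (Multiplicative.ofAdd (1 : ℤ)) : SDP k l)⁻¹
        * SemidirectProduct.inl (glim k l 0 ^ k)
        * SemidirectProduct.inr (Multiplicative.ofAdd (1 : ℤ))
        = SemidirectProduct.inl ((shiftφ k l (Multiplicative.ofAdd (1 : ℤ)))⁻¹ (glim k l 0 ^ k)) := by
      rw [SemidirectProduct.inl_aut_inv, map_inv]
    rw [mul_assoc, mul_assoc, ← mul_assoc, ← mul_assoc, h1, ← map_mul]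
    have h2 : ((shiftφ k l (Multiplicative.ofAdd (1 : ℤ)))⁻¹ (glim k l 0 ^ k))
        = glim k l (-1) ^ k := by
      have : (shiftφ k l (Multiplicative.ofAdd (1 : ℤ)))⁻¹
          = shiftφ k l (Multiplicative.ofAdd (-1 : ℤ)) := by
        rw [← map_inv]; rfl
      rw [this, shiftφ_apply, map_zpow, shiftHom_glim]
      norm_num
    rw [h2]
    have h3 : glim k l (-1) ^ k * glim k l 0 ^ (-l) = 1 := by
      have := glim_rel k l (-1)
      rw [show (-1 : ℤ) + 1 = 0 by norm_num] at this
      exact this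
    rw [h3, map_one])

@[simp] lemma phi_g : phi k l (bsG k l) = SemidirectProduct.inl (glim k l 0) :=
  PresentedGroup.toGroup.of _

@[simp] lemma phi_t : phi k l (bsT k l) = SemidirectProduct.inr (Multiplicative.ofAdd (1 : ℤ)) :=
  PresentedGroup.toGroup.of _

lemma psi_phi : (psi k l).comp (phi k l) = MonoidHom.id _ := by
  ext b
  cases b
  · show psi k l (phi k l (bsG k l)) = bsG k l
    rw [phi_g, psi_inl, iota_glim]
    group
  · show psi k l (phi k l (bsT k l)) = bsT k l
    rw [phi_t, psi_inr, tau_apply, toAdd_ofAdd, zpow_one]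

lemma phi_psi : (phi k l).comp (psi k l) = MonoidHom.id _ := by
  apply SemidirectProduct.hom_ext
  · refine PresentedGroup.ext fun n => ?_
    show phi k l (psi k l (SemidirectProduct.inl (glim k l n)))
      = SemidirectProduct.inl (glim k l n)
    rw [psi_inl, iota_glim]
    simp only [map_mul, map_zpow, phi_g, phi_t]
    simp only [← map_zpow SemidirectProduct.inr]
    have h1 : (Multiplicative.ofAdd (1 : ℤ)) ^ n = Multiplicative.ofAdd n := by
      rw [← ofAdd_zsmul]; norm_num
    rw [h1]
    have h2 : (Multiplicative.ofAdd (1 : ℤ)) ^ (-n) = (Multiplicative.ofAdd n)⁻¹ := by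
      rw [← ofAdd_zsmul, ← ofAdd_neg]; norm_num
    rw [h2, ← SemidirectProduct.inl_aut, shiftφ_apply, shiftHom_glim]
    norm_num
  · apply MonoidHom.ext_mint
    show phi k l (psi k l (SemidirectProduct.inr (Multiplicative.ofAdd (1 : ℤ))))
      = SemidirectProduct.inr (Multiplicative.ofAdd (1 : ℤ))
    rw [psi_inr, tau_apply, toAdd_ofAdd, zpow_one, phi_t]

end Stmt17Aux

theorem stmt17 (k l : ℤ) (hk : 2 ≤ k) (hl : 2 ≤ l) :
    ∃ ι : GlimBS k l →* BSgrp k l,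
      (∀ n : ℤ, ι (glim k l n) = bsT k l ^ n * bsG k l * bsT k l ^ (-n)) ∧
      (∀ ι' : GlimBS k l →* BSgrp k l,
        (∀ n : ℤ, ι' (glim k l n) = bsT k l ^ n * bsG k l * bsT k l ^ (-n)) → ι' = ι) ∧
      Function.Injective ι ∧
      ι.range = (bsDeg k l).ker := by
  open Stmt17Aux in
  refine ⟨iota k l, iota_glim k l, ?_, ?_, ?_⟩
  · intro ι' h
    ext n
    show ι' (glim k l n) = iota k l (glim k l n)
    rw [h, iota_glim]
  · intro a b hab
    have h1 : phi k l (psi k l (SemidirectProduct.inl a))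
        = phi k l (psi k l (SemidirectProduct.inl b)) := by
      rw [psi_inl, psi_inl, hab]
    have h2 := DFunLike.congr_fun (phi_psi k l) (SemidirectProduct.inl a)
    have h3 := DFunLike.congr_fun (phi_psi k l) (SemidirectProduct.inl b)
    simp only [MonoidHom.comp_apply, MonoidHom.id_apply] at h2 h3
    exact SemidirectProduct.inl_injective (h2.symm.trans (h1.trans h3))
  · have hdeg : bsDeg k l = (SemidirectProduct.rightHom).comp (phi k l) := by
      ext b
      cases b
      · show bsDeg k l (bsG k l) = SemidirectProduct.rightHom (phi k l (bsG k l))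
        rw [phi_g, SemidirectProduct.rightHom_inl]
        exact PresentedGroup.toGroup.of _
      · show bsDeg k l (bsT k l) = SemidirectProduct.rightHom (phi k l (bsT k l))
        rw [phi_t, SemidirectProduct.rightHom_inr]
        exact PresentedGroup.toGroup.of _
    apply le_antisymm
    · rintro x ⟨y, rfl⟩
      rw [MonoidHom.mem_ker, hdeg]
      have h2 := DFunLike.congr_fun (phi_psi k l) (SemidirectProduct.inl y)
      simp only [MonoidHom.comp_apply, MonoidHom.id_apply, psi_inl] at h2
      rw [MonoidHom.comp_apply, h2, SemidirectProduct.rightHom_inl]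
    · intro x hx
      rw [MonoidHom.mem_ker, hdeg, MonoidHom.comp_apply, ← MonoidHom.mem_ker,
        ← SemidirectProduct.range_inl_eq_ker_rightHom] at hx
      obtain ⟨y, hy⟩ := hx
      refine ⟨y, ?_⟩
      have h2 := DFunLike.congr_fun (psi_phi k l) x
      simp only [MonoidHom.comp_apply, MonoidHom.id_apply] at h2
      rw [← h2, ← hy, psi_inl]
end
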